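/- arXiv:2212.06249 — 3 statements merged into one kernel-verified Lean document; each statement's English description precedes it below -/
import Mathlib

section
/- Let C be a tensor code of dimension k in 𝔽 and let j ∈ {1,…,k} with j + n/n₁ ≤ k. If C is j-TMRD with respect to the Ravagnani-type anticodes 𝒜^R, then C is (j + n/n₁)-TMRD with respect to 𝒜^R. -/
open Module Function

namespace TensorPaper

variable {F : Type*} [Field F] [Fintype F]

/-- The tensor space `𝔽 = 𝔽_q^{n₁} ⊗ ⋯ ⊗ 𝔽_q^{n_r}`, identified with `r`-dimensional arrays. -/
abbrev TSpace (F : Type*) {r : ℕ} (n : Fin r → ℕ) : Type _ := (∀ i, Fin (n i)) → F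

/-- The dual code with respect to the standard bilinear form `X*Y = ∑ X_m Y_m`. -/
def dualCode {ι : Type*} [Fintype ι] (C : Submodule F (ι → F)) : Submodule F (ι → F) where
  carrier := { X | ∀ Y ∈ C, ∑ m, X m * Y m = 0 }
  add_mem' := by
    intro a b ha hb Y hY
    have h1 := ha Y hY
    have h2 := hb Y hY
    simp only [Pi.add_apply, add_mul]
    rw [Finset.sum_add_distrib, h1, h2, add_zero]
  zero_mem' := by
    intro Y _
    simp
  smul_mem' := by
    intro c a ha Y hY
    have h1 := ha Y hY
    simp only [Pi.smul_apply, smul_eq_mul, mul_assoc]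
    rw [← Finset.mul_sum, h1, mul_zero]

/-- The array corresponding to a simple (rank-one) tensor `x⁽¹⁾ ⊗ ⋯ ⊗ x⁽ʳ⁾`. -/
def simpleTensor {r : ℕ} (n : Fin r → ℕ) (x : ∀ i, Fin (n i) → F) : TSpace F n :=
  fun m => ∏ i, x i (m i)

/-- The closure-type anticode `A⁽¹⁾ ⊗ ⋯ ⊗ A⁽ʳ⁾`: the span of all simple tensors whose
`i`-th factor lies in `U i`. -/
def closureAnticode {r : ℕ} (n : Fin r → ℕ) (U : ∀ i, Submodule F (Fin (n i) → F)) :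
    Submodule F (TSpace F n) :=
  Submodule.span F { X | ∃ x : ∀ i, Fin (n i) → F, (∀ i, x i ∈ U i) ∧ X = simpleTensor n x }

/-- The family `𝒜^cl` of closure-type anticodes. -/
def ClosureAnticodes {r : ℕ} (n : Fin r → ℕ) : Set (Submodule F (TSpace F n)) :=
  { A | ∃ U : ∀ i, Submodule F (Fin (n i) → F), A = closureAnticode n U }

/-- The family `𝒜^R` of Ravagnani-type anticodes:
`𝔽^{n₁} ⊗ ⋯ ⊗ A^{(i)} ⊗ ⋯ ⊗ 𝔽^{n_r}` with `n_i = n₁`. -/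
def RavagnaniAnticodes {r : ℕ} (n : Fin (r + 2) → ℕ) : Set (Submodule F (TSpace F n)) :=
  { A | ∃ (i : Fin (r + 2)) (U : Submodule F (Fin (n i) → F)),
      n i = n 0 ∧ A = closureAnticode n (Function.update (fun s => ⊤) i U) }

/-- The family `𝒜^D` of Delsarte-type anticodes:
`𝔽^{n₁} ⊗ ⋯ ⊗ A^{(i)} ⊗ ⋯ ⊗ 𝔽^{n_r}` with `i ≠ p` for some `p` with `n_p = n_r`. -/
def DelsarteAnticodes {r : ℕ} (n : Fin (r + 2) → ℕ) : Set (Submodule F (TSpace F n)) :=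
  { A | ∃ (p i : Fin (r + 2)), n p = n (Fin.last (r + 1)) ∧ i ≠ p ∧
      ∃ U : Submodule F (Fin (n i) → F),
        A = closureAnticode n (Function.update (fun s => ⊤) i U) }

/-- The `j`-th tensor weight `t_j^R` of `C` with respect to `𝒜^R`, with the convention
`t^R({0}) = n + n/n₁`. -/
noncomputable def tR {r : ℕ} (n : Fin (r + 2) → ℕ) (j : ℕ) (C : Submodule F (TSpace F n)) : ℕ := by
  classical exact
    if C = ⊥ then (∏ i, n i) + (∏ i, n i) / n 0
    else sInf { a | ∃ A ∈ RavagnaniAnticodes n, j ≤ finrank F ↥(C ⊓ A) ∧ finrank F ↥A = a }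

/-- The `j`-th tensor weight `t_j^D` of `C` with respect to `𝒜^D`. -/
noncomputable def tD {r : ℕ} (n : Fin (r + 2) → ℕ) (j : ℕ) (C : Submodule F (TSpace F n)) : ℕ :=
  sInf { a | ∃ A ∈ DelsarteAnticodes n, j ≤ finrank F ↥(C ⊓ A) ∧ finrank F ↥A = a }

/-- The `j`-th tensor weight `t_j^cl` of `C` with respect to `𝒜^cl`. -/
noncomputable def tCl {r : ℕ} (n : Fin r → ℕ) (j : ℕ) (C : Submodule F (TSpace F n)) : ℕ :=
  sInf { a | ∃ A ∈ ClosureAnticodes n, j ≤ finrank F ↥(C ⊓ A) ∧ finrank F ↥A = a }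

/-- The `j`-th dual tensor weight `s_j^cl` of `C` with respect to the dual anticodes
`𝒜̄^cl = {A^⊥ : A ∈ 𝒜^cl}`. -/
noncomputable def sCl {r : ℕ} (n : Fin r → ℕ) (j : ℕ) (C : Submodule F (TSpace F n)) : ℕ :=
  sInf { a | ∃ A ∈ ClosureAnticodes n,
    j ≤ finrank F ↥(C ⊓ dualCode A) ∧ finrank F ↥(dualCode A) = a }

/-- `C` is `j`-TMRD with respect to `𝒜^R`: `t_j^R(C) = n − (n/n₁)⌊(n₁/n)(k−j)⌋`. -/
def isTMRD {r : ℕ} (n : Fin (r + 2) → ℕ) (j : ℕ) (C : Submodule F (TSpace F n)) : Prop :=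
  tR n j C = (∏ i, n i) - ((∏ i, n i) / n 0) * (n 0 * (finrank F ↥C - j) / ∏ i, n i)

/-- `C` is `j`-TBMD with respect to `𝒜^R`: `n − t_j^R(C) − t₁^R(C^⊥) < 0`. -/
def isTBMD {r : ℕ} (n : Fin (r + 2) → ℕ) (j : ℕ) (C : Submodule F (TSpace F n)) : Prop :=
  ((∏ i, n i : ℕ) : ℤ) - tR n j C - tR n 1 (dualCode C) < 0

/-- The Gaussian binomial coefficient `[a choose b]_q`, equal to `0` if `a < b`. -/
noncomputable def qBinom (q : ℕ) (a : ℤ) (b : ℕ) : ℚ :=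
  if a < (b : ℤ) then 0
  else ∏ i ∈ Finset.range b, ((q : ℚ) ^ (a - i).toNat - 1) / ((q : ℚ) ^ (i + 1) - 1)

/-- The `(a,j)`-th tensor binomial moment of `C` with respect to `𝒜^R`. -/
noncomputable def BR {r : ℕ} (n : Fin (r + 2) → ℕ) (j : ℕ) (C : Submodule F (TSpace F n))
    (a : ℕ) : ℚ :=
  ∑ᶠ A ∈ (RavagnaniAnticodes n ∩ {A | finrank F ↥A = a}),
    qBinom (Fintype.card F) (finrank F ↥(C ⊓ A)) j

/-- The `(a,j)`-th entry of the weight distribution of `C` with respect to `𝒜^R`. -/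
noncomputable def WR {r : ℕ} (n : Fin (r + 2) → ℕ) (j : ℕ) (C : Submodule F (TSpace F n))
    (a : ℕ) : ℚ :=
  ∑ᶠ A ∈ (RavagnaniAnticodes n ∩ {A | finrank F ↥A = a}),
    (Nat.card {D : Submodule F (TSpace F n) //
      D ≤ C ⊓ A ∧ finrank F ↥D = j ∧
      ∀ B ∈ RavagnaniAnticodes n, D ≤ B → B ≤ A → B = A} : ℚ)

/-- The `(a,j)`-th tensor binomial moment of `C` with respect to `𝒜^D`. -/
noncomputable def BD {r : ℕ} (n : Fin (r + 2) → ℕ) (j : ℕ) (C : Submodule F (TSpace F n))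
    (a : ℕ) : ℚ :=
  ∑ᶠ A ∈ (DelsarteAnticodes n ∩ {A | finrank F ↥A = a}),
    qBinom (Fintype.card F) (finrank F ↥(C ⊓ A)) j

/-- The `(a,j)`-th entry of the weight distribution of `C` with respect to `𝒜^D`. -/
noncomputable def WD {r : ℕ} (n : Fin (r + 2) → ℕ) (j : ℕ) (C : Submodule F (TSpace F n))
    (a : ℕ) : ℚ :=
  ∑ᶠ A ∈ (DelsarteAnticodes n ∩ {A | finrank F ↥A = a}),
    (Nat.card {D : Submodule F (TSpace F n) //
      D ≤ C ⊓ A ∧ finrank F ↥D = j ∧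
      ∀ B ∈ DelsarteAnticodes n, D ≤ B → B ≤ A → B = A} : ℚ)

/-- The `(a,j)`-th normalized tensor binomial moment of `C` with respect to `𝒜^R`. -/
noncomputable def bR {r : ℕ} (n : Fin (r + 2) → ℕ) (j : ℕ) (C : Submodule F (TSpace F n))
    (a : ℤ) : ℚ :=
  if a < 0 then 0
  else if a ≤ ((∏ i, n i : ℕ) : ℤ) - tR n j C - tR n 1 (dualCode C) then
    BR n j C (a.toNat + tR n j C) /
      ((RavagnaniAnticodes (F := F) n ∩ {A | finrank F ↥A = a.toNat + tR n j C}).ncard : ℚ)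
  else if ((∏ i, n i : ℕ) : ℤ) ∣ a * n 0 then
    qBinom (Fintype.card F) ((finrank F ↥C : ℤ) + a + tR n j C - (∏ i, n i : ℕ)) j
  else 0

/-- The `j`-th tensor zeta function of `C` with respect to `𝒜^R`. -/
noncomputable def ZR {r : ℕ} (n : Fin (r + 2) → ℕ) (j : ℕ) (C : Submodule F (TSpace F n)) :
    PowerSeries ℚ :=
  PowerSeries.mk fun a => bR n j C (a : ℤ)

/-- The `q`-Bernstein polynomial `𝓑_{b,a}(X,Y;q)`. -/
noncomputable def qBernstein {R : Type*} [CommRing R] [Algebra ℚ R] (q : ℕ) (b a : ℕ)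
    (X Y : R) : R :=
  algebraMap ℚ R (qBinom q (b : ℤ) a) * Y ^ a *
    ∏ c ∈ Finset.range (b - a), (X - (q : R) ^ c * Y)

/-- The closure-type anticodes with dimension distribution `𝔞`. -/
def closureAnticodesOf {r : ℕ} (n : Fin r → ℕ) (𝔞 : Fin r → ℕ) :
    Set (Submodule F (TSpace F n)) :=
  { A | ∃ U : ∀ i, Submodule F (Fin (n i) → F),
      (∀ i, finrank F ↥(U i) = 𝔞 i) ∧ A = closureAnticode n U }

/-- The refined tensor binomial moment `B_𝔞^{(cl,j)}(C)`. -/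
noncomputable def BCl {r : ℕ} (n : Fin r → ℕ) (j : ℕ) (C : Submodule F (TSpace F n))
    (𝔞 : Fin r → ℕ) : ℚ :=
  ∑ᶠ A ∈ closureAnticodesOf n 𝔞, qBinom (Fintype.card F) (finrank F ↥(C ⊓ A)) j

/-- The refined weight distribution `W_𝔞^{(cl,j)}(C)`. -/
noncomputable def WCl {r : ℕ} (n : Fin r → ℕ) (j : ℕ) (C : Submodule F (TSpace F n))
    (𝔞 : Fin r → ℕ) : ℚ :=
  ∑ᶠ A ∈ closureAnticodesOf n 𝔞,
    (Nat.card {D : Submodule F (TSpace F n) //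
      D ≤ C ⊓ A ∧ finrank F ↥D = j ∧
      ∀ B ∈ ClosureAnticodes n, D ≤ B → B ≤ A → B = A} : ℚ)

/-- The refined tensor binomial moment `B_𝔞^{(D,j)}(C)` for Delsarte-type anticodes. -/
noncomputable def BDref {r : ℕ} (n : Fin (r + 2) → ℕ) (j : ℕ) (C : Submodule F (TSpace F n))
    (𝔞 : Fin (r + 2) → ℕ) : ℚ :=
  ∑ᶠ A ∈ (DelsarteAnticodes n ∩ closureAnticodesOf n 𝔞),
    qBinom (Fintype.card F) (finrank F ↥(C ⊓ A)) j

/-- The refined tensor binomial moment `B_𝔞^{(R,j)}(C)` for Ravagnani-type anticodes. -/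
noncomputable def BRref {r : ℕ} (n : Fin (r + 2) → ℕ) (j : ℕ) (C : Submodule F (TSpace F n))
    (𝔞 : Fin (r + 2) → ℕ) : ℚ :=
  ∑ᶠ A ∈ (RavagnaniAnticodes n ∩ closureAnticodesOf n 𝔞),
    qBinom (Fintype.card F) (finrank F ↥(C ⊓ A)) j

/-- The power series `P(T^m)` obtained from a polynomial `P` by substituting `T^m`. -/
noncomputable def substPow (P : Polynomial ℚ) (m : ℕ) : PowerSeries ℚ :=
  ∑ i ∈ Finset.range (P.natDegree + 1), PowerSeries.C (P.coeff i) * PowerSeries.X ^ (m * i)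


section AuxStmt0

variable {F : Type*} [Field F]

theorem exists_submodule_finrank_eq' {V : Type*} [AddCommGroup V] [Module F V]
    [FiniteDimensional F V] (d : ℕ) (hd : d ≤ finrank F V) :
    ∃ W : Submodule F V, finrank F W = d := by
  induction d with
  | zero => exact ⟨⊥, finrank_bot F V⟩
  | succ d ih =>
    obtain ⟨W, hW⟩ := ih (Nat.le_of_succ_le hd)
    obtain ⟨x, hx⟩ := W.exists_of_finrank_lt (by omega)
    have hx0 : x ≠ 0 := fun h => hx 1 one_ne_zero (by simp [h])
    have hinf : W ⊓ (F ∙ x) = ⊥ := by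
      rw [eq_bot_iff]
      rintro y hy
      rw [Submodule.mem_inf] at hy
      obtain ⟨c, rfl⟩ := Submodule.mem_span_singleton.mp hy.2
      rcases eq_or_ne c 0 with rfl | hc
      · simp
      · exact absurd hy.1 (hx c hc)
    refine ⟨W ⊔ (F ∙ x), ?_⟩
    have h2 := Submodule.finrank_sup_add_finrank_inf_eq W (F ∙ x)
    rw [hinf, finrank_bot, finrank_span_singleton hx0] at h2
    omega

theorem exists_le_finrank_eq' {V : Type*} [AddCommGroup V] [Module F V]
    [FiniteDimensional F V] (U : Submodule F V) (d : ℕ) (hd : d ≤ finrank F U) :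
    ∃ W : Submodule F V, W ≤ U ∧ finrank F W = d := by
  obtain ⟨W, hW⟩ := exists_submodule_finrank_eq' (V := ↥U) d hd
  refine ⟨W.map U.subtype, Submodule.map_subtype_le U W, ?_⟩
  rw [Submodule.finrank_map_subtype_eq, hW]

theorem splitAt_symm_at {r : ℕ} {β : Fin r → Type*} (i : Fin r) (c : β i)
    (y : ∀ s : {s : Fin r // s ≠ i}, β s) :
    (Equiv.piSplitAt i β).symm (c, y) i = c := by
  rw [Equiv.piSplitAt_symm_apply, dif_pos rfl]

theorem splitAt_symm_ne {r : ℕ} {β : Fin r → Type*} (i : Fin r) (c : β i)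
    (y : ∀ s : {s : Fin r // s ≠ i}, β s) (s : {s : Fin r // s ≠ i}) :
    (Equiv.piSplitAt i β).symm (c, y) s = y s := by
  rw [Equiv.piSplitAt_symm_apply, dif_neg s.2]

theorem prod_split' {r : ℕ} (i : Fin r) (f : Fin r → F) :
    ∏ s, f s = f i * ∏ s : {s : Fin r // s ≠ i}, f s := by
  rw [← Finset.mul_prod_erase Finset.univ f (Finset.mem_univ i)]
  congr 1
  exact Finset.prod_subtype (Finset.univ.erase i) (by simp) f

theorem closureAnticode_update_eq {r : ℕ} (n : Fin r → ℕ) (i : Fin r)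
    (U : Submodule F (Fin (n i) → F)) :
    closureAnticode n (Function.update (fun s => (⊤ : Submodule F (Fin (n s) → F))) i U) =
      ⨅ y : ∀ s : {s : Fin r // s ≠ i}, Fin (n (s : Fin r)),
        U.comap (LinearMap.funLeft F F
          fun c => (Equiv.piSplitAt i fun s => Fin (n s)).symm (c, y)) := by
  classical
  set e := Equiv.piSplitAt i fun s => Fin (n s) with he
  apply le_antisymm
  · rw [closureAnticode, Submodule.span_le]
    rintro X ⟨x, hx, rfl⟩
    rw [SetLike.mem_coe, Submodule.mem_iInf]
    intro y
    rw [Submodule.mem_comap]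
    have hxi : x i ∈ U := by
      have := hx i
      rwa [Function.update_self] at this
    have hfun : (LinearMap.funLeft F F fun c => e.symm (c, y)) (simpleTensor n x)
        = (∏ s : {s : Fin r // s ≠ i}, x s (y s)) • x i := by
      funext c
      rw [LinearMap.funLeft_apply, Pi.smul_apply, smul_eq_mul, simpleTensor,
        prod_split' i, splitAt_symm_at, mul_comm]
      congr 1
      exact Finset.prod_congr rfl fun s _ => by rw [splitAt_symm_ne]
    rw [hfun]
    exact U.smul_mem _ hxi
  · intro X hX
    rw [Submodule.mem_iInf] at hX
    have hX' : ∀ y, (fun c => X (e.symm (c, y))) ∈ U := fun y => hX y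
    have hg : ∀ y : ∀ s : {s : Fin r // s ≠ i}, Fin (n (s : Fin r)),
        ∃ gy : ∀ s, Fin (n s) → F, gy =
          Function.update (fun (s : Fin r) (c : Fin (n s)) =>
              if h : s = i then 0 else if y ⟨s, h⟩ = c then (1 : F) else 0)
            i (fun c => X (e.symm (c, y))) := fun y => ⟨_, rfl⟩
    choose g hgdef using hg
    have hsum : X = ∑ y, simpleTensor n (g y) := by
      funext m
      rw [Finset.sum_apply]
      have hterm : ∀ y : ∀ s : {s : Fin r // s ≠ i}, Fin (n (s : Fin r)),
          simpleTensor n (g y) m =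
          if y = (fun s : {s : Fin r // s ≠ i} => m s) then X m else 0 := by
        intro y
        rw [simpleTensor, prod_split' i]
        have h1 : g y i (m i) = X (e.symm (m i, y)) := by
          rw [hgdef y]; simp only [Function.update_self]
        have h2 : ∀ s : {s : Fin r // s ≠ i},
            g y s (m s) = if y s = m s then (1 : F) else 0 := by
          intro s
          rw [hgdef y]
          simp only [Function.update_of_ne s.2, dif_neg s.2]
        rw [h1]
        by_cases hy : y = (fun s : {s : Fin r // s ≠ i} => m s)
        · rw [if_pos hy]
          have hp : ∏ s : {s : Fin r // s ≠ i}, g y s (m s) = 1 := by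
            apply Finset.prod_eq_one
            intro s _
            rw [h2 s, if_pos]
            rw [hy]
          rw [hp, mul_one, hy]
          congr 1
          have : e m = (m i, fun s : {s : Fin r // s ≠ i} => m s) := by
            rw [he, Equiv.piSplitAt_apply]
          rw [← this, Equiv.symm_apply_apply]
        · rw [if_neg hy]
          obtain ⟨s, hs⟩ : ∃ s : {s : Fin r // s ≠ i}, y s ≠ m s := by
            by_contra hc
            push_neg at hc
            exact hy (funext hc)
          have hp : ∏ s : {s : Fin r // s ≠ i}, g y s (m s) = 0 :=
            Finset.prod_eq_zero (Finset.mem_univ s) (by rw [h2 s, if_neg hs])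
          rw [hp, mul_zero]
      symm
      calc ∑ y, simpleTensor n (g y) m
          = ∑ y, if y = (fun s : {s : Fin r // s ≠ i} => m s) then X m else 0 :=
            Finset.sum_congr rfl fun y _ => hterm y
        _ = X m := by rw [Finset.sum_ite_eq' Finset.univ _ fun _ => X m,
            if_pos (Finset.mem_univ _)]
    rw [hsum]
    refine Submodule.sum_mem _ fun y _ => Submodule.subset_span ⟨g y, ?_, rfl⟩
    intro s
    rcases eq_or_ne s i with rfl | hs
    · rw [Function.update_self]
      rw [hgdef y]
      simp only [Function.update_self]
      exact hX' y
    · rw [Function.update_of_ne hs]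
      exact Submodule.mem_top

theorem finrank_iInf_comap' {r : ℕ} (n : Fin r → ℕ) (i : Fin r)
    (U : Submodule F (Fin (n i) → F)) :
    finrank F ↥(⨅ y : ∀ s : {s : Fin r // s ≠ i}, Fin (n (s : Fin r)),
        U.comap (LinearMap.funLeft F F
          fun c => (Equiv.piSplitAt i fun s => Fin (n s)).symm (c, y))) =
      (∏ s : {s : Fin r // s ≠ i}, n (s : Fin r)) * finrank F ↥U := by
  classical
  set e := Equiv.piSplitAt i fun s => Fin (n s) with he
  set S := ⨅ y : ∀ s : {s : Fin r // s ≠ i}, Fin (n (s : Fin r)),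
        U.comap (LinearMap.funLeft F F fun c => e.symm (c, y)) with hS
  have hmem : ∀ X : ((∀ s, Fin (n s)) → F), X ∈ S ↔
      ∀ y, (fun c => X (e.symm (c, y))) ∈ U := by
    intro X
    rw [hS, Submodule.mem_iInf]
    exact ⟨fun h y => h y, fun h y => h y⟩
  let E : ↥S ≃ₗ[F] ((∀ s : {s : Fin r // s ≠ i}, Fin (n (s : Fin r))) → ↥U) :=
    { toFun := fun X y => ⟨fun c => X.1 (e.symm (c, y)), (hmem X.1).mp X.2 y⟩
      map_add' := fun X Z => by ext y c; rfl
      map_smul' := fun a X => by ext y c; rfl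
      invFun := fun f => ⟨fun m => (f (fun s => m s) : Fin (n i) → F) (m i), by
        rw [hmem]
        intro y
        have : (fun c => (f (fun s : {s : Fin r // s ≠ i} => e.symm (c, y) s) :
            Fin (n i) → F) (e.symm (c, y) i)) = fun c => (f y : Fin (n i) → F) c := by
          funext c
          have h1 : (fun s : {s : Fin r // s ≠ i} => e.symm (c, y) s) = y :=
            funext fun s => by
              rw [he]; exact splitAt_symm_ne (β := fun s => Fin (n s)) i c y s
          rw [h1]
          rw [he]
          exact congrArg _ (splitAt_symm_at (β := fun s => Fin (n s)) i c y)
        rw [this]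
        exact (f y).2⟩
      left_inv := fun X => by
        ext m
        show (X.1 (e.symm (m i, fun s => m s))) = X.1 m
        have : e m = (m i, fun s : {s : Fin r // s ≠ i} => m s) := by
          rw [he, Equiv.piSplitAt_apply]
        rw [← this, Equiv.symm_apply_apply]
      right_inv := fun f => by
        ext y c
        show (f (fun s : {s : Fin r // s ≠ i} => e.symm (c, y) s) :
            Fin (n i) → F) (e.symm (c, y) i) = (f y : Fin (n i) → F) c
        have h1 : (fun s : {s : Fin r // s ≠ i} => e.symm (c, y) s) = y :=
          funext fun s => by
            rw [he]; exact splitAt_symm_ne (β := fun s => Fin (n s)) i c y s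
        rw [h1]
        rw [he]
        exact congrArg _ (splitAt_symm_at (β := fun s => Fin (n s)) i c y) }
  rw [E.finrank_eq, Module.finrank_pi_fintype, Finset.sum_const, Finset.card_univ, smul_eq_mul]
  congr 1
  rw [Fintype.card_pi]
  exact Finset.prod_congr rfl fun s _ => Fintype.card_fin _

theorem closureAnticode_update_mono {r : ℕ} (n : Fin r → ℕ) (i : Fin r)
    {U V : Submodule F (Fin (n i) → F)} (h : U ≤ V) :
    closureAnticode n (Function.update (fun s => (⊤ : Submodule F (Fin (n s) → F))) i U) ≤
      closureAnticode n (Function.update (fun s => (⊤ : Submodule F (Fin (n s) → F))) i V) := by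
  apply Submodule.span_mono
  rintro X ⟨x, hx, rfl⟩
  refine ⟨x, fun s => ?_, rfl⟩
  rcases eq_or_ne s i with rfl | hs
  · rw [Function.update_self]
    have := hx s
    rw [Function.update_self] at this
    exact h this
  · rw [Function.update_of_ne hs]
    exact Submodule.mem_top

end AuxStmt0


/-- If `C` is `j`-TMRD with respect to `𝒜^R`, then `C` is `(j + n/n₁)`-TMRD
with respect to `𝒜^R`. -/
theorem stmt0 {F : Type*} [Field F] [Fintype F] (r : ℕ) (n : Fin (r + 2) → ℕ)
    (hn1 : 2 ≤ n 0) (hmin : ∀ i, n 0 ≤ n i) (hmax : ∀ i, n i ≤ n (Fin.last (r + 1)))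
    (C : Submodule F (TSpace F n)) (j : ℕ) (hj1 : 1 ≤ j)
    (hjk : j + (∏ i, n i) / n 0 ≤ finrank F ↥C)
    (h : isTMRD n j C) :
    isTMRD n (j + (∏ i, n i) / n 0) C := by
  classical
  have hn0 : 0 < n 0 := by omega
  have hnpos : ∀ i, 0 < n i := fun i => lt_of_lt_of_le (by omega) (hmin i)
  have hCbot : C ≠ ⊥ := by
    intro hC
    rw [hC, finrank_bot] at hjk
    have hj0 : j ≤ 0 := le_trans (Nat.le_add_right j _) hjk
    omega
  unfold isTMRD at h ⊢
  unfold tR at h ⊢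
  rw [if_neg hCbot] at h ⊢
  set N := ∏ i, n i with hN
  set m := N / n 0 with hm
  set k := finrank F ↥C with hk
  clear_value N m k
  have hsplit : ∀ i : Fin (r + 2),
      n i * ∏ s : {s : Fin (r + 2) // s ≠ i}, n (s : Fin (r + 2)) = N := by
    intro i
    rw [hN, ← Finset.mul_prod_erase Finset.univ n (Finset.mem_univ i)]
    congr 1
    exact (Finset.prod_subtype (Finset.univ.erase i) (by simp) n).symm
  have hmsplit : ∀ i : Fin (r + 2), n i = n 0 →
      (∏ s : {s : Fin (r + 2) // s ≠ i}, n (s : Fin (r + 2))) = m := by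
    intro i hi
    rw [hm, ← hsplit i, hi, Nat.mul_div_cancel_left _ hn0]
  have hNm : N = n 0 * m := by rw [← hmsplit 0 rfl]; exact (hsplit 0).symm
  have hNpos : 0 < N := by rw [hN]; exact Finset.prod_pos fun i _ => hnpos i
  have hmpos : 0 < m := by
    rw [← hmsplit 0 rfl]
    exact Finset.prod_pos fun s _ => hnpos _
  have hambient : finrank F (TSpace F n) = N := by
    rw [Module.finrank_fintype_fun_eq_card, Fintype.card_pi, hN]
    exact Finset.prod_congr rfl fun i _ => Fintype.card_fin _
  have hkN : k ≤ N := by rw [hk, ← hambient]; exact Submodule.finrank_le C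
  have hrankA : ∀ (i : Fin (r + 2)) (U : Submodule F (Fin (n i) → F)), n i = n 0 →
      finrank F ↥(closureAnticode n
        (Function.update (fun s => (⊤ : Submodule F (Fin (n s) → F))) i U)) =
        m * finrank F ↥U := by
    intro i U hi
    rw [closureAnticode_update_eq, finrank_iInf_comap', hmsplit i hi]
  have hIntLow : ∀ A : Submodule F (TSpace F n),
      k + finrank F ↥A ≤ N + finrank F ↥(C ⊓ A) := by
    intro A
    have h1 := Submodule.finrank_sup_add_finrank_inf_eq C A
    have h2 : finrank F ↥(C ⊔ A) ≤ N := hambient ▸ Submodule.finrank_le _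
    omega
  set q' := (k - (j + m)) / m with hq'
  set q := (k - j) / m with hq
  clear_value q' q
  have hqq' : q = q' + 1 := by
    rw [hq, hq']
    have hsub : k - (j + m) = k - j - m := by omega
    rw [hsub, ← Nat.div_eq_sub_div hmpos (by omega)]
  have hNdivm : N / m = n 0 := by rw [hNm, Nat.mul_div_cancel _ hmpos]
  have hq'le : q' ≤ n 0 := by
    have h1 : k - (j + m) ≤ N := le_trans (Nat.sub_le _ _) hkN
    have h2 := Nat.div_le_div_right (c := m) h1
    rw [hNdivm] at h2
    exact le_trans (by rw [hq']) h2
  have hmq' : m * q' ≤ k - (j + m) := by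
    rw [hq', Nat.mul_comm]
    exact Nat.div_mul_le_self _ _
  have hmq : m * q ≤ k - j := by
    rw [hq, Nat.mul_comm]
    exact Nat.div_mul_le_self _ _
  have hqle : q ≤ n 0 := by
    have h1 : k - j ≤ N := le_trans (Nat.sub_le _ _) hkN
    have h2 := Nat.div_le_div_right (c := m) h1
    rw [hNdivm] at h2
    exact le_trans (by rw [hq]) h2
  have hq1 : 1 ≤ q := by
    rw [hq]
    exact (Nat.one_le_div_iff hmpos).mpr (by omega)
  -- rewrite the TMRD values
  have hval : ∀ j', n 0 * (k - j') / N = (k - j') / m := by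
    intro j'
    rw [hNm, Nat.mul_div_mul_left _ _ hn0]
  rw [hval j, ← hq] at h
  rw [hval (j + m), ← hq']
  -- h : sInf S_j = N - m * q ; goal : sInf S_{j+m} = N - m * q'
  -- construct the witness anticode
  obtain ⟨U, hU⟩ := exists_submodule_finrank_eq' (F := F) (V := Fin (n 0) → F)
    (n 0 - q') (by rw [Module.finrank_fintype_fun_eq_card, Fintype.card_fin]; omega)
  set A₀ := closureAnticode n
    (Function.update (fun s => (⊤ : Submodule F (Fin (n s) → F))) 0 U) with hA₀
  have hA₀mem : A₀ ∈ RavagnaniAnticodes n := ⟨0, U, rfl, hA₀⟩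
  have hA₀rank : finrank F ↥A₀ = m * (n 0 - q') := by
    rw [hA₀, hrankA 0 U rfl, hU]
  have hmulq' : m * (n 0 - q') + m * q' = m * n 0 := by
    rw [← Nat.mul_add, Nat.sub_add_cancel hq'le]
  have hcomm : m * n 0 = n 0 * m := Nat.mul_comm _ _
  have hA₀int : j + m ≤ finrank F ↥(C ⊓ A₀) := by
    have h1 := hIntLow A₀
    rw [hA₀rank] at h1
    omega
  have hmemS : m * (n 0 - q') ∈
      {a | ∃ A ∈ RavagnaniAnticodes n, j + m ≤ finrank F ↥(C ⊓ A) ∧ finrank F ↥A = a} :=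
    ⟨A₀, hA₀mem, hA₀int, hA₀rank⟩
  have hub : sInf {a | ∃ A ∈ RavagnaniAnticodes n,
      j + m ≤ finrank F ↥(C ⊓ A) ∧ finrank F ↥A = a} ≤ m * (n 0 - q') :=
    Nat.sInf_le hmemS
  have hlb : N - m * q' ≤ sInf {a | ∃ A ∈ RavagnaniAnticodes n,
      j + m ≤ finrank F ↥(C ⊓ A) ∧ finrank F ↥A = a} := by
    refine le_csInf ⟨_, hmemS⟩ ?_
    rintro a ⟨A, hAmem, hint, hrank⟩
    obtain ⟨i, UA, hi, hAeq⟩ := hAmem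
    set dU := finrank F ↥UA with hdU
    clear_value dU
    have hrank' : a = m * dU := by
      rw [← hrank, hAeq, hrankA i UA hi, hdU]
    have haSj : a ∈ {a | ∃ A ∈ RavagnaniAnticodes n,
        j ≤ finrank F ↥(C ⊓ A) ∧ finrank F ↥A = a} :=
      ⟨A, ⟨i, UA, hi, hAeq⟩, le_trans (by omega) hint, hrank⟩
    have hinfle : N - m * q ≤ a := h ▸ Nat.sInf_le haSj
    have hmulq : m * (n 0 - q) + m * q = m * n 0 := by
      rw [← Nat.mul_add, Nat.sub_add_cancel hqle]
    have hmsq : m * q = m * q' + m := by rw [hqq', Nat.mul_succ]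
    by_cases hcase : m * dU = N - m * q
    · -- contradiction: can shrink the anticode
      exfalso
      have hdU1 : 1 ≤ dU := by
        by_contra h0
        have hz : dU = 0 := by omega
        have ha0 : a = 0 := by rw [hrank', hz, Nat.mul_zero]
        have hle : finrank F ↥(C ⊓ A) ≤ a := hrank ▸ Submodule.finrank_mono inf_le_right
        omega
      obtain ⟨U', hU'le, hU'rank⟩ := exists_le_finrank_eq' UA (dU - 1) (by omega)
      set A' := closureAnticode n
        (Function.update (fun s => (⊤ : Submodule F (Fin (n s) → F))) i U') with hA'
      have hA'le : A' ≤ A := by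
        rw [hAeq, hA']
        exact closureAnticode_update_mono n i hU'le
      have hA'rank : finrank F ↥A' = m * (dU - 1) := by
        rw [hA', hrankA i U' hi, hU'rank]
      have hsucc : m * (dU - 1) + m = m * dU := by
        have hd : dU - 1 + 1 = dU := by omega
        calc m * (dU - 1) + m = m * (dU - 1 + 1) := by rw [Nat.mul_add, Nat.mul_one]
          _ = m * dU := by rw [hd]
      have hdrop : j ≤ finrank F ↥(C ⊓ A') := by
        have h1 := Submodule.finrank_sup_add_finrank_inf_eq (C ⊓ A) A'
        have h2 : finrank F ↥((C ⊓ A) ⊔ A') ≤ finrank F ↥A :=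
          Submodule.finrank_mono (sup_le inf_le_right hA'le)
        have h3 : (C ⊓ A) ⊓ A' = C ⊓ A' := by
          rw [inf_assoc, inf_eq_right.mpr hA'le]
        rw [h3, hA'rank] at h1
        omega
      have hle2 : sInf {a | ∃ A ∈ RavagnaniAnticodes n,
          j ≤ finrank F ↥(C ⊓ A) ∧ finrank F ↥A = a} ≤ m * (dU - 1) :=
        Nat.sInf_le ⟨A', ⟨i, U', hi, hA'⟩, hdrop, hA'rank⟩
      rw [h] at hle2
      omega
    · -- a strictly larger
      have heq : N - m * q = m * (n 0 - q) := by omega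
      have hmul1 : m * (n 0 - q) ≤ m * dU := by omega
      have hle1 : n 0 - q ≤ dU := Nat.le_of_mul_le_mul_left hmul1 hmpos
      have hne : n 0 - q ≠ dU := by
        intro hx
        apply hcase
        have : m * dU = m * (n 0 - q) := by rw [hx]
        omega
      have hlt : n 0 - q + 1 ≤ dU := by omega
      have hfin : m * (n 0 - q + 1) ≤ m * dU := Nat.mul_le_mul_left m hlt
      have hsucc2 : m * (n 0 - q + 1) = m * (n 0 - q) + m := Nat.mul_succ m _
      omega
  omega

end TensorPaper
end

section
/- Let Δ be the list (n₁,…,n_r) if the maximum n_r is attained by more than one of the n_i, and the list (n₁,…,n_{r−1}) otherwise. For any a ∈ {0,…,n}, the number |𝒜^D_a| of Delsarte-type anticodes of dimension a equals: 0 if n ∤ a·m for every entry m of Δ; Σ over the entries m of Δ with n | a·m of [m choose a·m/n]_q, if n | a·m for some entry m of Δ and a ∉ {0,n}; and 1 if a ∈ {0,n}. Moreover, if n ∤ a·m for every entry m of Δ, then for every tensor code C and every j ∈ {1,…,dim C} one has B_a^{(D,j)}(C) = 0 and W_a^{(D,j)}(C) = 0. -/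
open Module Function

namespace TensorPaper

variable {F : Type*} [Field F] [Fintype F]

section SubspaceCounting

variable {F : Type*} [Field F] [Fintype F]

lemma natCard_sigma' {ι : Type*} [Fintype ι] (β : ι → Type*) [∀ i, Finite (β i)] :
    Nat.card (Σ i, β i) = ∑ i, Nat.card (β i) := by
  have := fun i => Fintype.ofFinite (β i)
  simp [Nat.card_eq_fintype_card, Fintype.card_sigma]

lemma natCard_sigma_const {ι : Type*} [Finite ι] (β : ι → Type*) [∀ i, Finite (β i)]
    {c : ℕ} (h : ∀ i, Nat.card (β i) = c) :
    Nat.card (Σ i, β i) = Nat.card ι * c := by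
  have := Fintype.ofFinite ι
  have := fun i => Fintype.ofFinite (β i)
  simp only [Nat.card_eq_fintype_card, Fintype.card_sigma]
  rw [Finset.sum_congr rfl (fun i _ => (Nat.card_eq_fintype_card (α := β i)).symm.trans (h i))]
  simp [Finset.card_univ, mul_comm]

lemma natCard_li (V : Type*) [AddCommGroup V] [Module F V] [Finite V] (b : ℕ) :
    Nat.card {v : Fin b → V // LinearIndependent F v}
      = ∏ i ∈ Finset.range b, (Fintype.card F ^ (finrank F V) - Fintype.card F ^ i) := by
  induction b with
  | zero =>
      rw [Finset.range_zero, Finset.prod_empty]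
      have : Unique {v : Fin 0 → V // LinearIndependent F v} :=
        ⟨⟨⟨Fin.elim0, linearIndependent_empty_type⟩⟩, by
          rintro ⟨v, hv⟩; ext i; exact Fin.elim0 i⟩
      exact Nat.card_unique
  | succ b ih =>
      have Φbij : Function.Bijective
          (fun p : (Σ w : {v : Fin b → V // LinearIndependent F v},
              {x : V // x ∉ Submodule.span F (Set.range w.1)}) =>
            (⟨Fin.snoc p.1.1 p.2.1, linearIndependent_fin_snoc.mpr ⟨p.1.2, p.2.2⟩⟩ :
              {v : Fin (b+1) → V // LinearIndependent F v})) := by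
        constructor
        · rintro ⟨⟨w, hw⟩, ⟨x, hx⟩⟩ ⟨⟨w', hw'⟩, ⟨x', hx'⟩⟩ h
          have h1 := congrArg Subtype.val h
          dsimp at h1
          have hww : w = w' := by
            have := congrArg Fin.init h1
            rwa [Fin.init_snoc, Fin.init_snoc] at this
          have hxx : x = x' := by
            have := congrArg (fun f => f (Fin.last b)) h1
            simpa using this
          subst hww; subst hxx; rfl
        · rintro ⟨v, hv⟩
          have hv' := linearIndependent_fin_snoc.mp
            (by rw [Fin.snoc_init_self]; exact hv)
          exact ⟨⟨⟨Fin.init v, hv'.1⟩, ⟨v (Fin.last b), hv'.2⟩⟩,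
            Subtype.ext (Fin.snoc_init_self v)⟩
      rw [← Nat.card_congr (Equiv.ofBijective _ Φbij)]
      rw [natCard_sigma_const _
        (c := Fintype.card F ^ (finrank F V) - Fintype.card F ^ b) ?_]
      · rw [ih, Finset.prod_range_succ]
      · rintro ⟨w, hw⟩
        have := Fintype.ofFinite V
        classical
        rw [Nat.card_eq_fintype_card, Fintype.card_subtype_compl]
        congr 1
        · exact card_eq_pow_finrank (K := F) (V := V)
        · have h1 : Fintype.card {x : V // x ∈ Submodule.span F (Set.range w)}
              = Fintype.card (Submodule.span F (Set.range w)) := rfl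
          rw [h1, card_eq_pow_finrank (K := F), finrank_span_eq_card hw]
          simp

lemma subspace_fibration (V : Type*) [AddCommGroup V] [Module F V] [Finite V] (b : ℕ) :
    Nat.card {U : Submodule F V // finrank F ↥U = b}
        * ∏ i ∈ Finset.range b, (Fintype.card F ^ b - Fintype.card F ^ i)
      = ∏ i ∈ Finset.range b, (Fintype.card F ^ (finrank F V) - Fintype.card F ^ i) := by
  have Φbij : Function.Bijective
      (fun p : (Σ U : {U : Submodule F V // finrank F ↥U = b},
          {w : Fin b → ↥U.1 // LinearIndependent F w}) =>
        (⟨fun i => (p.2.1 i : V), p.2.2.map' p.1.1.subtype (Submodule.ker_subtype _)⟩ :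
          {v : Fin b → V // LinearIndependent F v})) := by
    have key : ∀ (U : Submodule F V) (hU : finrank F ↥U = b)
        (w : Fin b → ↥U) (hw : LinearIndependent F w),
        Submodule.span F (Set.range fun i => ((w i : V))) = U := by
      intro U hU w hw
      have htop : Submodule.span F (Set.range w) = ⊤ :=
        hw.span_eq_top_of_card_eq_finrank' (by simp [hU])
      have : (Set.range fun i => ((w i : V))) = U.subtype '' Set.range w := by
        rw [← Set.range_comp]; rfl
      rw [this, ← Submodule.map_span, htop, Submodule.map_top, Submodule.range_subtype]
    constructor
    · rintro ⟨⟨U, hU⟩, ⟨w, hw⟩⟩ ⟨⟨U', hU'⟩, ⟨w', hw'⟩⟩ h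
      have h1 := congrArg Subtype.val h
      dsimp at h1
      have hUU : U = U' := by
        rw [← key U hU w hw, ← key U' hU' w' hw']
        simp_rw [h1]
      subst hUU
      have : w = w' := by
        funext i
        exact Subtype.ext (congrFun h1 i)
      subst this; rfl
    · rintro ⟨v, hv⟩
      refine ⟨⟨⟨Submodule.span F (Set.range v), by rw [finrank_span_eq_card hv]; simp⟩,
        ⟨fun i => ⟨v i, Submodule.subset_span (Set.mem_range_self i)⟩, ?_⟩⟩, rfl⟩
      exact hv.of_comp (Submodule.span F (Set.range v)).subtype
  have h3 := natCard_sigma_const (ι := {U : Submodule F V // finrank F ↥U = b})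
    (fun U => {w : Fin b → ↥U.1 // LinearIndependent F w})
    (c := ∏ i ∈ Finset.range b, (Fintype.card F ^ b - Fintype.card F ^ i))
    (fun U => by rw [natCard_li (↥U.1) b, U.2])
  calc Nat.card {U : Submodule F V // finrank F ↥U = b}
        * ∏ i ∈ Finset.range b, (Fintype.card F ^ b - Fintype.card F ^ i)
      = Nat.card (Σ U : {U : Submodule F V // finrank F ↥U = b},
          {w : Fin b → ↥U.1 // LinearIndependent F w}) := h3.symm
    _ = Nat.card {v : Fin b → V // LinearIndependent F v} :=
        Nat.card_congr (Equiv.ofBijective _ Φbij)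
    _ = _ := natCard_li V b

lemma card_subspaces (V : Type*) [AddCommGroup V] [Module F V] [Finite V] (b : ℕ) :
    (Nat.card {U : Submodule F V // finrank F ↥U = b} : ℚ)
      = qBinom (Fintype.card F) (finrank F V) b := by
  set q := Fintype.card F with hqdef
  set m := finrank F V with hmdef
  have hq : 1 < q := Fintype.one_lt_card
  have hq1 : (1 : ℚ) < (q : ℚ) := by exact_mod_cast hq
  have hq0 : (0 : ℚ) < (q : ℚ) := lt_trans one_pos hq1
  by_cases hbm : m < b
  · have : IsEmpty {U : Submodule F V // finrank F ↥U = b} := by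
      constructor
      rintro ⟨U, hU⟩
      have := U.finrank_le
      omega
    rw [Nat.card_of_isEmpty, qBinom, if_pos (by exact_mod_cast hbm)]
    simp
  push_neg at hbm
  have hcast : ∀ k : ℕ, b ≤ k → ((∏ i ∈ Finset.range b, (q ^ k - q ^ i) : ℕ) : ℚ)
      = ∏ i ∈ Finset.range b, ((q : ℚ) ^ k - (q : ℚ) ^ i) := by
    intro k hk
    rw [Nat.cast_prod]
    refine Finset.prod_congr rfl fun i hi => ?_
    rw [Finset.mem_range] at hi
    rw [Nat.cast_sub (Nat.pow_le_pow_right (le_of_lt hq) (by omega))]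
    push_cast; ring
  have key := congrArg (fun x : ℕ => (x : ℚ)) (subspace_fibration (F := F) V b)
  simp only [Nat.cast_mul] at key
  rw [hcast m hbm, hcast b le_rfl] at key
  have factor : ∀ k : ℕ, b ≤ k → ∏ i ∈ Finset.range b, ((q : ℚ) ^ k - (q : ℚ) ^ i)
      = (∏ i ∈ Finset.range b, (q : ℚ) ^ i)
        * ∏ i ∈ Finset.range b, ((q : ℚ) ^ (k - i) - 1) := by
    intro k hk
    rw [← Finset.prod_mul_distrib]
    refine Finset.prod_congr rfl fun i hi => ?_
    rw [Finset.mem_range] at hi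
    have : (q : ℚ) ^ i * (q : ℚ) ^ (k - i) = (q : ℚ) ^ k := by
      rw [← pow_add]; congr 1; omega
    rw [mul_sub, this, mul_one]
  have reflect : ∏ i ∈ Finset.range b, ((q : ℚ) ^ (b - i) - 1)
      = ∏ i ∈ Finset.range b, ((q : ℚ) ^ (i + 1) - 1) := by
    rw [← Finset.prod_range_reflect]
    refine Finset.prod_congr rfl fun j hj => ?_
    rw [Finset.mem_range] at hj
    congr 2
    omega
  have hBne : ∏ i ∈ Finset.range b, ((q : ℚ) ^ (i + 1) - 1) ≠ 0 :=
    Finset.prod_ne_zero_iff.mpr fun i _ => by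
      have : (1 : ℚ) < (q : ℚ) ^ (i + 1) := one_lt_pow₀ hq1 (by omega)
      linarith
  have hCne : (∏ i ∈ Finset.range b, (q : ℚ) ^ i) ≠ 0 :=
    Finset.prod_ne_zero_iff.mpr fun i _ => pow_ne_zero _ (ne_of_gt hq0)
  rw [factor m hbm, factor b le_rfl, reflect] at key
  rw [qBinom, if_neg (by exact_mod_cast not_lt.mpr hbm)]
  have hterm : ∀ i ∈ Finset.range b,
      ((q : ℚ) ^ (((m : ℤ) - i).toNat) - 1) / ((q : ℚ) ^ (i + 1) - 1)
      = ((q : ℚ) ^ (m - i) - 1) / ((q : ℚ) ^ (i + 1) - 1) := by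
    intro i hi
    rw [Finset.mem_range] at hi
    congr 3
    omega
  rw [Finset.prod_congr rfl hterm, Finset.prod_div_distrib, eq_div_iff hBne]
  apply mul_left_cancel₀ hCne
  linear_combination key

end SubspaceCounting

section Anticode

variable {k : ℕ} {n : Fin k → ℕ}

/-- Index type for the coordinates other than `i`. -/
abbrev ExtIx (n : Fin k → ℕ) (i : Fin k) : Type _ := ∀ s : {s : Fin k // s ≠ i}, Fin (n s.1)

def extBase (hpos : ∀ s, 0 < n s) (i : Fin k) (g : ExtIx n i) : ∀ s, Fin (n s) :=
  fun s => if h : s = i then ⟨0, hpos s⟩ else g ⟨s, h⟩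

def extF (hpos : ∀ s, 0 < n s) (i : Fin k) (g : ExtIx n i) (t : Fin (n i)) : ∀ s, Fin (n s) :=
  Function.update (extBase hpos i g) i t

lemma extBase_ne (hpos : ∀ s, 0 < n s) {i : Fin k} (g : ExtIx n i) {s : Fin k} (h : s ≠ i) :
    extBase hpos i g s = g ⟨s, h⟩ := dif_neg h

@[simp] lemma extF_self (hpos : ∀ s, 0 < n s) (i : Fin k) (g : ExtIx n i) (t : Fin (n i)) :
    extF hpos i g t i = t := Function.update_self _ _ _

lemma extF_ne (hpos : ∀ s, 0 < n s) {i : Fin k} (g : ExtIx n i) (t : Fin (n i)) {s : Fin k}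
    (h : s ≠ i) : extF hpos i g t s = g ⟨s, h⟩ := by
  rw [extF, Function.update_of_ne h, extBase_ne hpos g h]

lemma extF_restrict (hpos : ∀ s, 0 < n s) (i : Fin k) (m : ∀ s, Fin (n s)) :
    extF hpos i (fun s => m s.1) (m i) = m := by
  funext s
  by_cases h : s = i
  · subst h; exact extF_self hpos s _ _
  · exact extF_ne hpos _ _ h

variable {F : Type*} [Field F] [Fintype F]

/-- The `i`-th slice of a tensor through the complementary point `g`. -/
def sliceF (hpos : ∀ s, 0 < n s) (i : Fin k) (X : TSpace F n) (g : ExtIx n i) :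
    Fin (n i) → F := fun t => X (extF hpos i g t)

lemma sliceF_simpleTensor (hpos : ∀ s, 0 < n s) (i : Fin k) (x : ∀ s, Fin (n s) → F)
    (g : ExtIx n i) :
    sliceF hpos i (simpleTensor n x) g
      = (∏ s ∈ Finset.univ.erase i, x s (extBase hpos i g s)) • x i := by
  funext t
  simp only [sliceF, simpleTensor, Pi.smul_apply, smul_eq_mul]
  rw [← Finset.prod_erase_mul Finset.univ _ (Finset.mem_univ i), extF_self]
  congr 1
  refine Finset.prod_congr rfl fun s hs => ?_
  have h : s ≠ i := Finset.ne_of_mem_erase hs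
  rw [extF_ne hpos _ _ h, extBase_ne hpos _ h]

/-- The submodule of tensors all of whose `i`-th slices lie in `U`. -/
def critSub (hpos : ∀ s, 0 < n s) (i : Fin k) (U : Submodule F (Fin (n i) → F)) :
    Submodule F (TSpace F n) where
  carrier := { X | ∀ g, sliceF hpos i X g ∈ U }
  add_mem' := fun ha hb g => U.add_mem (ha g) (hb g)
  zero_mem' := fun g => U.zero_mem
  smul_mem' := fun c X hX g => U.smul_mem c (hX g)

lemma simpleTensor_mem_anticode (i : Fin k) (U : Submodule F (Fin (n i) → F))
    {x : ∀ s, Fin (n s) → F} (hx : x i ∈ U) :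
    simpleTensor n x ∈ closureAnticode n (Function.update (fun _ => ⊤) i U) := by
  apply Submodule.subset_span
  refine ⟨x, fun s => ?_, rfl⟩
  by_cases h : s = i
  · subst h; rwa [Function.update_self]
  · rw [Function.update_of_ne h]; exact Submodule.mem_top

lemma closureAnticode_update_eq_s9 (hpos : ∀ s, 0 < n s) (i : Fin k)
    (U : Submodule F (Fin (n i) → F)) :
    closureAnticode n (Function.update (fun _ => ⊤) i U) = critSub hpos i U := by
  apply le_antisymm
  · rw [closureAnticode]
    apply Submodule.span_le.mpr
    rintro X ⟨x, hx, rfl⟩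
    intro g
    rw [sliceF_simpleTensor]
    have hxi : x i ∈ U := by have := hx i; rwa [Function.update_self] at this
    exact U.smul_mem _ hxi
  · intro X hX
    classical
    have hrep : X = ∑ g : ExtIx n i, simpleTensor n
        (Function.update (fun s => (Pi.single (extBase hpos i g s) 1 : Fin (n s) → F)) i
          (sliceF hpos i X g)) := by
      funext m
      rw [Finset.sum_apply]
      have hterm : ∀ g : ExtIx n i,
          simpleTensor n (Function.update
            (fun s => (Pi.single (extBase hpos i g s) 1 : Fin (n s) → F)) i
            (sliceF hpos i X g)) m
          = (∏ s ∈ Finset.univ.erase i,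
              (Pi.single (extBase hpos i g s) (1:F) : Fin (n s) → F) (m s))
            * sliceF hpos i X g (m i) := by
        intro g
        rw [simpleTensor, ← Finset.prod_erase_mul Finset.univ _ (Finset.mem_univ i),
          Function.update_self]
        congr 1
        refine Finset.prod_congr rfl fun s hs => ?_
        rw [Function.update_of_ne (Finset.ne_of_mem_erase hs)]
      rw [Finset.sum_congr rfl fun g _ => hterm g]
      rw [Finset.sum_eq_single (fun s : {s : Fin k // s ≠ i} => m s.1)]
      · have hone : ∀ s ∈ Finset.univ.erase i,
            (Pi.single (extBase hpos i (fun s : {s : Fin k // s ≠ i} => m s.1) s) (1:F) :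
              Fin (n s) → F) (m s) = 1 := by
          intro s hs
          rw [extBase_ne hpos _ (Finset.ne_of_mem_erase hs)]
          exact Pi.single_eq_same _ _
        rw [Finset.prod_congr rfl hone, Finset.prod_const_one, one_mul, sliceF,
          extF_restrict]
      · intro g _ hg
        have : ∃ s : {s : Fin k // s ≠ i}, m s.1 ≠ g s := by
          by_contra hc
          push_neg at hc
          exact hg (funext fun s => (hc s).symm)
        obtain ⟨s₀, hs₀⟩ := this
        have hmem : s₀.1 ∈ Finset.univ.erase i := Finset.mem_erase.mpr ⟨s₀.2, Finset.mem_univ _⟩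
        rw [Finset.prod_eq_zero hmem, zero_mul]
        rw [extBase_ne hpos _ s₀.2]
        rw [Pi.single_apply]
        exact if_neg hs₀
      · intro h
        exact absurd (Finset.mem_univ _) h
    rw [hrep]
    apply Submodule.sum_mem
    intro g _
    apply simpleTensor_mem_anticode
    rw [Function.update_self]
    exact hX g

lemma mem_anticode_iff (hpos : ∀ s, 0 < n s) (i : Fin k) (U : Submodule F (Fin (n i) → F))
    (X : TSpace F n) :
    X ∈ closureAnticode n (Function.update (fun _ => ⊤) i U) ↔
      ∀ g, sliceF hpos i X g ∈ U := by
  rw [closureAnticode_update_eq_s9 hpos]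
  exact Iff.rfl

end Anticode

section Anticode2

variable {k : ℕ} {n : Fin k → ℕ} {F : Type*} [Field F] [Fintype F]

lemma restrict_extF (hpos : ∀ s, 0 < n s) {i : Fin k} (g : ExtIx n i) (t : Fin (n i)) :
    (fun s : {s : Fin k // s ≠ i} => extF hpos i g t s.1) = g := by
  funext s
  exact extF_ne hpos g t s.2

lemma sliceF_assemble (hpos : ∀ s, 0 < n s) (i : Fin k) (f : ExtIx n i → (Fin (n i) → F))
    (g : ExtIx n i) :
    sliceF hpos i (fun m => f (fun s => m s.1) (m i)) g = f g := by
  funext t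
  show f (fun s : {s : Fin k // s ≠ i} => extF hpos i g t s.1) (extF hpos i g t i) = f g t
  rw [restrict_extF hpos g t, extF_self]

/-- The anticode `𝔽 ⊗ ⋯ ⊗ U ⊗ ⋯ ⊗ 𝔽` is linearly equivalent to a product of copies of `U`. -/
def anticodeEquiv (hpos : ∀ s, 0 < n s) (i : Fin k) (U : Submodule F (Fin (n i) → F)) :
    ↥(closureAnticode n (Function.update (fun _ => ⊤) i U)) ≃ₗ[F] (ExtIx n i → ↥U) where
  toFun X := fun g => ⟨sliceF hpos i X.1 g, (mem_anticode_iff hpos i U X.1).mp X.2 g⟩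
  map_add' X Y := rfl
  map_smul' c X := rfl
  invFun f := ⟨fun m => (f (fun s => m s.1) : Fin (n i) → F) (m i), by
    rw [mem_anticode_iff hpos]
    intro g
    rw [sliceF_assemble hpos i (fun g => (f g : Fin (n i) → F)) g]
    exact (f g).2⟩
  left_inv X := by
    apply Subtype.ext
    funext m
    show sliceF hpos i X.1 (fun s => m s.1) (m i) = X.1 m
    rw [sliceF, extF_restrict]
  right_inv f := by
    funext g
    apply Subtype.ext
    show sliceF hpos i (fun m => (f (fun s => m s.1) : Fin (n i) → F) (m i)) g = (f g : _)
    rw [sliceF_assemble hpos i (fun g => (f g : Fin (n i) → F)) g]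

lemma finrank_anticode (hpos : ∀ s, 0 < n s) (i : Fin k) (U : Submodule F (Fin (n i) → F)) :
    finrank F ↥(closureAnticode n (Function.update (fun _ => ⊤) i U))
      = (∏ s ∈ Finset.univ.erase i, n s) * finrank F ↥U := by
  classical
  rw [(anticodeEquiv hpos i U).finrank_eq, Module.finrank_pi_fintype F,
    Finset.sum_const, Finset.card_univ, smul_eq_mul]
  congr 1
  rw [Fintype.card_pi]
  rw [Finset.prod_congr rfl (fun (s : {s : Fin k // s ≠ i}) _ => Fintype.card_fin (n s.1))]
  exact (Finset.prod_subtype (Finset.univ.erase i)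
    (fun x => by simp [Finset.mem_erase]) (fun s => n s)).symm

lemma finrank_TSpace : finrank F (TSpace F n) = ∏ s, n s := by
  rw [Module.finrank_pi, Fintype.card_pi]
  exact Finset.prod_congr rfl fun s _ => Fintype.card_fin _

lemma anticode_bot (hpos : ∀ s, 0 < n s) (i : Fin k) :
    closureAnticode n (Function.update (fun _ => ⊤) i (⊥ : Submodule F (Fin (n i) → F))) = ⊥ := by
  rw [← Submodule.finrank_eq_zero (R := F), finrank_anticode hpos, finrank_bot, mul_zero]

lemma anticode_top (hpos : ∀ s, 0 < n s) (i : Fin k) :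
    closureAnticode n (Function.update (fun _ => ⊤) i (⊤ : Submodule F (Fin (n i) → F))) = ⊤ := by
  apply Submodule.eq_top_of_finrank_eq
  rw [finrank_anticode hpos, finrank_top, Module.finrank_pi, Fintype.card_fin, finrank_TSpace]
  exact Finset.prod_erase_mul Finset.univ n (Finset.mem_univ i)

lemma anticode_inj_same (hpos : ∀ s, 0 < n s) (i : Fin k)
    (U U' : Submodule F (Fin (n i) → F))
    (h : closureAnticode n (Function.update (fun _ => ⊤) i U)
       = closureAnticode n (Function.update (fun _ => ⊤) i U')) : U = U' := by
  have main : ∀ (W W' : Submodule F (Fin (n i) → F)),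
      closureAnticode n (Function.update (fun _ => ⊤) i W)
        ≤ closureAnticode n (Function.update (fun _ => ⊤) i W') → W ≤ W' := by
    intro W W' hle u hu
    set g₀ : ExtIx n i := fun s => ⟨0, hpos s.1⟩ with hg₀
    set x : ∀ s, Fin (n s) → F :=
      Function.update (fun s => (Pi.single (extBase hpos i g₀ s) 1 : Fin (n s) → F)) i u with hx
    have hX : simpleTensor n x ∈ closureAnticode n (Function.update (fun _ => ⊤) i W) :=
      simpleTensor_mem_anticode i W (by rw [hx, Function.update_self]; exact hu)
    have hX' := hle hX
    rw [mem_anticode_iff hpos] at hX'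
    have := hX' g₀
    rw [sliceF_simpleTensor hpos] at this
    have hc : ∀ s ∈ Finset.univ.erase i, x s (extBase hpos i g₀ s) = 1 := by
      intro s hs
      rw [hx, Function.update_of_ne (Finset.ne_of_mem_erase hs)]
      exact Pi.single_eq_same _ _
    rw [Finset.prod_congr rfl hc, Finset.prod_const_one, one_smul, hx,
      Function.update_self] at this
    exact this
  exact le_antisymm (main U U' (le_of_eq h)) (main U' U (ge_of_eq h))

lemma anticode_inj_ne (hpos : ∀ s, 0 < n s) {i i' : Fin k} (hne : i ≠ i')
    {U : Submodule F (Fin (n i) → F)} {U' : Submodule F (Fin (n i') → F)}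
    (hU : U ≠ ⊥) (hU' : U' ≠ ⊤) :
    closureAnticode n (Function.update (fun _ => ⊤) i U)
      ≠ closureAnticode n (Function.update (fun _ => ⊤) i' U') := by
  intro h
  apply hU'
  rw [Submodule.eq_top_iff']
  intro w
  obtain ⟨u, huU, hu0⟩ := Submodule.exists_mem_ne_zero_of_ne_bot hU
  obtain ⟨t₀, ht₀⟩ := Function.ne_iff.mp hu0
  set m₀ : ∀ s, Fin (n s) := Function.update (fun s => (⟨0, hpos s⟩ : Fin (n s))) i t₀ with hm₀
  set x : ∀ s, Fin (n s) → F :=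
    Function.update (Function.update
      (fun s => (Pi.single (⟨0, hpos s⟩ : Fin (n s)) 1 : Fin (n s) → F)) i u) i' w with hx
  have hxi : x i = u := by
    rw [hx, Function.update_of_ne hne, Function.update_self]
  have hxi' : x i' = w := Function.update_self _ _ _
  have hX : simpleTensor n x ∈ closureAnticode n (Function.update (fun _ => ⊤) i U) :=
    simpleTensor_mem_anticode i U (by rw [hxi]; exact huU)
  rw [h, mem_anticode_iff hpos] at hX
  set g₀ : ExtIx n i' := fun s => m₀ s.1 with hg₀
  have := hX g₀
  rw [sliceF_simpleTensor hpos, hxi'] at this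
  have hbase : ∀ s : Fin k, s ≠ i' → extBase hpos i' g₀ s = m₀ s := fun s hs =>
    extBase_ne hpos g₀ hs
  have hprod : (∏ s ∈ Finset.univ.erase i', x s (extBase hpos i' g₀ s)) = u t₀ := by
    rw [Finset.prod_eq_single_of_mem i
      (Finset.mem_erase.mpr ⟨hne, Finset.mem_univ _⟩) ?_]
    · rw [hbase i hne, hxi, hm₀, Function.update_self]
    · intro s hs hsne
      have hsi' : s ≠ i' := Finset.ne_of_mem_erase hs
      rw [hbase s hsi', hx, Function.update_of_ne hsi', Function.update_of_ne hsne,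
        hm₀, Function.update_of_ne hsne]
      exact Pi.single_eq_same _ _
  rw [hprod] at this
  have : w = (u t₀)⁻¹ • ((u t₀) • w) := by
    rw [smul_smul, inv_mul_cancel₀ ht₀, one_smul]
  rw [this]
  exact U'.smul_mem _ (by assumption)

end Anticode2


/-- Cardinality of the set `𝒜^D_a` of Delsarte-type anticodes of dimension `a`, together with
the vanishing of `B_a^{(D,j)}(C)` and `W_a^{(D,j)}(C)` when no anticode of dimension `a`
exists.  Here `D` is the index set of the list `Δ`. -/
theorem stmt9 {F : Type*} [Field F] [Fintype F] (r : ℕ) (n : Fin (r + 2) → ℕ)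
    (hn1 : 2 ≤ n 0) (hmin : ∀ i, n 0 ≤ n i) (hmax : ∀ i, n i ≤ n (Fin.last (r + 1)))
    (a : ℕ) (ha : a ≤ ∏ i, n i)
    (D : Finset (Fin (r + 2)))
    (hD : D = if 1 < (Finset.univ.filter fun i => n i = n (Fin.last (r + 1))).card
      then (Finset.univ : Finset (Fin (r + 2)))
      else Finset.univ.erase (Fin.last (r + 1))) :
    ((∀ i ∈ D, ¬ (∏ s, n s) ∣ a * n i) →
      (DelsarteAnticodes (F := F) n ∩ {A | finrank F ↥A = a}).ncard = 0) ∧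
    ((∃ i ∈ D, (∏ s, n s) ∣ a * n i) → a ≠ 0 → a ≠ ∏ s, n s →
      ((DelsarteAnticodes (F := F) n ∩ {A | finrank F ↥A = a}).ncard : ℚ)
        = ∑ i ∈ D.filter (fun i => (∏ s, n s) ∣ a * n i),
            qBinom (Fintype.card F) (n i) (a * n i / ∏ s, n s)) ∧
    ((a = 0 ∨ a = ∏ s, n s) →
      (DelsarteAnticodes (F := F) n ∩ {A | finrank F ↥A = a}).ncard = 1) ∧
    ((∀ i ∈ D, ¬ (∏ s, n s) ∣ a * n i) →
      ∀ (C : Submodule F (TSpace F n)) (j : ℕ), 1 ≤ j → j ≤ finrank F ↥C →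
        BD n j C a = 0 ∧ WD n j C a = 0) := by
  classical
  have hpos : ∀ s, 0 < n s := fun s => lt_of_lt_of_le (by omega) (hmin s)
  have hN0 : 0 < ∏ s, n s := Finset.prod_pos (fun s _ => hpos s)
  have hfinsub : Finite (Submodule F (TSpace F n)) :=
    Finite.of_injective (fun A => (A : Set (TSpace F n))) SetLike.coe_injective
  have herase : ∀ i, (∏ s ∈ Finset.univ.erase i, n s) * n i = ∏ s, n s :=
    fun i => Finset.prod_erase_mul Finset.univ n (Finset.mem_univ i)
  have hmemD : ∀ (p i : Fin (r+2)), n p = n (Fin.last (r+1)) → i ≠ p → i ∈ D := by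
    intro p i hp hip
    rw [hD]
    split_ifs with hcard
    · exact Finset.mem_univ i
    · refine Finset.mem_erase.mpr ⟨?_, Finset.mem_univ i⟩
      intro hil
      apply hcard
      apply Finset.one_lt_card.mpr
      exact ⟨p, by simp [hp], i, by simp [hil], Ne.symm hip⟩
  have hexp : ∀ i ∈ D, ∃ p, n p = n (Fin.last (r+1)) ∧ i ≠ p := by
    intro i hi
    by_cases hcard : 1 < (Finset.univ.filter fun i => n i = n (Fin.last (r+1))).card
    · obtain ⟨p₁, hp₁, p₂, hp₂, hpne⟩ := Finset.one_lt_card.mp hcard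
      rw [Finset.mem_filter] at hp₁ hp₂
      by_cases h1 : i = p₁
      · exact ⟨p₂, hp₂.2, by rw [h1]; exact hpne⟩
      · exact ⟨p₁, hp₁.2, h1⟩
    · rw [hD, if_neg hcard] at hi
      exact ⟨Fin.last (r+1), rfl, (Finset.mem_erase.mp hi).1⟩
  have hstruct : ∀ A ∈ DelsarteAnticodes (F := F) n ∩ {A | finrank F ↥A = a},
      ∃ i ∈ D, ∃ U : Submodule F (Fin (n i) → F),
        A = closureAnticode n (Function.update (fun s => ⊤) i U) ∧
        a * n i = finrank F ↥U * ∏ s, n s := by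
    rintro A ⟨⟨p, i, hp, hip, U, rfl⟩, hfr⟩
    refine ⟨i, hmemD p i hp hip, U, rfl, ?_⟩
    simp only [Set.mem_setOf_eq] at hfr
    rw [← hfr, finrank_anticode hpos]
    rw [mul_comm (∏ s ∈ Finset.univ.erase i, n s) (finrank F ↥U), mul_assoc, herase i]
  have part1 : (∀ i ∈ D, ¬ (∏ s, n s) ∣ a * n i) →
      (DelsarteAnticodes (F := F) n ∩ {A | finrank F ↥A = a}) = ∅ := by
    intro hno
    rw [Set.eq_empty_iff_forall_notMem]
    intro A hA
    obtain ⟨i, hiD, U, -, hdim⟩ := hstruct A hA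
    exact hno i hiD ⟨finrank F ↥U, by rw [hdim, mul_comm]⟩
  have hlast0 : (0 : Fin (r+2)) ≠ Fin.last (r+1) := by
    simp [Fin.ext_iff]
  refine ⟨fun hno => by rw [part1 hno]; exact Set.ncard_empty _, ?_, ?_, ?_⟩
  · -- part 2: the counting formula
    intro hex ha0 haN
    set Dfil := D.filter (fun i => (∏ s, n s) ∣ a * n i) with hDfil
    have hb : ∀ i ∈ Dfil, (∏ s ∈ Finset.univ.erase i, n s) * (a * n i / ∏ s, n s) = a := by
      intro i hi
      obtain ⟨-, hdvd⟩ := Finset.mem_filter.mp hi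
      obtain ⟨c, hc⟩ := hdvd
      have hcc : a * n i / ∏ s, n s = c := by rw [hc, Nat.mul_div_cancel_left _ hN0]
      rw [hcc]
      have h2 : ((∏ s ∈ Finset.univ.erase i, n s) * c) * n i = a * n i := by
        calc ((∏ s ∈ Finset.univ.erase i, n s) * c) * n i
            = ((∏ s ∈ Finset.univ.erase i, n s) * n i) * c := by ring
          _ = (∏ s, n s) * c := by rw [herase i]
          _ = a * n i := hc.symm
      exact Nat.eq_of_mul_eq_mul_right (hpos i) h2
    have hbpos : ∀ i ∈ Dfil, 0 < a * n i / ∏ s, n s := by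
      intro i hi
      rcases Nat.eq_zero_or_pos (a * n i / ∏ s, n s) with h | h
      · exfalso; apply ha0; rw [← hb i hi, h, mul_zero]
      · exact h
    have hblt : ∀ i ∈ Dfil, a * n i / ∏ s, n s < n i := by
      intro i hi
      by_contra hcon
      push_neg at hcon
      have : (∏ s, n s) ≤ a := by
        calc (∏ s, n s) = (∏ s ∈ Finset.univ.erase i, n s) * n i := (herase i).symm
          _ ≤ (∏ s ∈ Finset.univ.erase i, n s) * (a * n i / ∏ s, n s) :=
              Nat.mul_le_mul_left _ hcon
          _ = a := hb i hi
      omega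
    have hΦ : ∀ p : (Σ i : {i // i ∈ Dfil},
        {U : Submodule F (Fin (n i.1) → F) // finrank F ↥U = a * n i.1 / ∏ s, n s}),
        closureAnticode n (Function.update (fun s => ⊤) p.1.1 p.2.1)
          ∈ DelsarteAnticodes (F := F) n ∩ {A | finrank F ↥A = a} := by
      rintro ⟨⟨i, hi⟩, ⟨U, hU⟩⟩
      obtain ⟨p, hp, hip⟩ := hexp i (Finset.mem_filter.mp hi).1
      refine ⟨⟨p, i, hp, hip, U, rfl⟩, ?_⟩
      show finrank F _ = a
      rw [finrank_anticode hpos, hU]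
      exact hb i hi
    have hΦbij : Function.Bijective (fun p : (Σ i : {i // i ∈ Dfil},
        {U : Submodule F (Fin (n i.1) → F) // finrank F ↥U = a * n i.1 / ∏ s, n s}) =>
        (⟨closureAnticode n (Function.update (fun s => ⊤) p.1.1 p.2.1), hΦ p⟩ :
          ↥(DelsarteAnticodes (F := F) n ∩ {A | finrank F ↥A = a}))) := by
      constructor
      · rintro ⟨⟨i, hi⟩, ⟨U, hU⟩⟩ ⟨⟨i', hi'⟩, ⟨U', hU'⟩⟩ h
        have hA := congrArg Subtype.val h
        dsimp at hA
        by_cases hii : i = i'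
        · subst hii
          have hUU := anticode_inj_same hpos i U U' hA
          subst hUU
          rfl
        · exfalso
          refine anticode_inj_ne hpos hii ?_ ?_ hA
          · intro hbot
            rw [hbot, finrank_bot] at hU
            exact (hbpos i hi).ne' hU.symm
          · intro htop
            rw [htop, finrank_top, Module.finrank_pi, Fintype.card_fin] at hU'
            exact (ne_of_gt (hblt i' hi')) hU'
      · rintro ⟨A, hA⟩
        obtain ⟨i, hiD, U, rfl, hdim⟩ := hstruct A hA
        have hdvd : (∏ s, n s) ∣ a * n i := ⟨finrank F ↥U, by rw [hdim, mul_comm]⟩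
        have hifil : i ∈ Dfil := Finset.mem_filter.mpr ⟨hiD, hdvd⟩
        have hUb : finrank F ↥U = a * n i / ∏ s, n s := by
          rw [hdim, Nat.mul_div_cancel _ hN0]
        exact ⟨⟨⟨i, hifil⟩, ⟨U, hUb⟩⟩, rfl⟩
    have hcard1 : ((DelsarteAnticodes (F := F) n ∩ {A | finrank F ↥A = a}).ncard : ℚ)
        = ∑ i : {i // i ∈ Dfil},
            (Nat.card {U : Submodule F (Fin (n i.1) → F) //
              finrank F ↥U = a * n i.1 / ∏ s, n s} : ℚ) := by
      rw [← Nat.card_coe_set_eq,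
        ← Nat.card_congr (Equiv.ofBijective _ hΦbij), natCard_sigma']
      push_cast
      rfl
    rw [hcard1]
    have hterm : ∀ i : {i // i ∈ Dfil},
        (Nat.card {U : Submodule F (Fin (n i.1) → F) //
          finrank F ↥U = a * n i.1 / ∏ s, n s} : ℚ)
        = qBinom (Fintype.card F) (n i.1) (a * n i.1 / ∏ s, n s) := by
      intro i
      rw [card_subspaces (Fin (n i.1) → F) (a * n i.1 / ∏ s, n s)]
      congr 1
      rw [Module.finrank_pi, Fintype.card_fin]
    rw [Finset.sum_congr rfl (fun i _ => hterm i)]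
    exact Finset.sum_coe_sort Dfil
      (fun i => qBinom (Fintype.card F) (n i) (a * n i / ∏ s, n s))
  · -- part 3: a = 0 or a = n
    intro h03
    rcases h03 with h0 | hN
    · subst h0
      have hSeq : (DelsarteAnticodes (F := F) n ∩ {A | finrank F ↥A = 0})
          = {(⊥ : Submodule F (TSpace F n))} := by
        apply Set.eq_singleton_iff_unique_mem.mpr
        constructor
        · refine ⟨⟨Fin.last (r+1), 0, rfl, hlast0, ⊥, (anticode_bot hpos 0).symm⟩, ?_⟩
          show finrank F ↥(⊥ : Submodule F (TSpace F n)) = 0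
          exact finrank_bot F _
        · rintro A ⟨-, hfr⟩
          exact Submodule.finrank_eq_zero.mp hfr
      rw [hSeq]
      exact Set.ncard_singleton _
    · subst hN
      have hSeq : (DelsarteAnticodes (F := F) n ∩ {A | finrank F ↥A = ∏ s, n s})
          = {(⊤ : Submodule F (TSpace F n))} := by
        apply Set.eq_singleton_iff_unique_mem.mpr
        constructor
        · refine ⟨⟨Fin.last (r+1), 0, rfl, hlast0, ⊤, (anticode_top hpos 0).symm⟩, ?_⟩
          show finrank F ↥(⊤ : Submodule F (TSpace F n)) = ∏ s, n s
          rw [finrank_top]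
          exact finrank_TSpace
        · rintro A ⟨-, hfr⟩
          apply Submodule.eq_top_of_finrank_eq
          rw [hfr, finrank_TSpace]
      rw [hSeq]
      exact Set.ncard_singleton _
  · -- part 4: vanishing of BD and WD
    intro hno C j hj1 hj2
    have hS := part1 hno
    constructor
    · rw [BD, hS, finsum_mem_empty]
    · rw [WD, hS, finsum_mem_empty]

end TensorPaper
end

section
/- Let δ₁ = {i ∈ {1,…,r} : n_i = n₁}. For any a ∈ {0,…,n}, the number |𝒜^R_a| of Ravagnani-type anticodes of dimension a equals: 0 if n ∤ a·n₁; |δ₁|·[n₁ choose a·n₁/n]_q if n | a·n₁ and a ∉ {0,n}; and 1 if a ∈ {0,n}. Moreover, if n ∤ a·n₁, then for every tensor code C and every j ∈ {1,…,dim C} one has B_a^{(R,j)}(C) = 0 and W_a^{(R,j)}(C) = 0. -/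
open Module Function

namespace TensorPaper

variable {F : Type*} [Field F] [Fintype F]

/-! ### Auxiliary machinery -/

section Aux

variable {r : ℕ}

/-- Combine values off `i` with a value at `i`. -/
def glue (n : Fin r → ℕ) (i : Fin r) (k : ∀ s : {s : Fin r // s ≠ i}, Fin (n s.1))
    (v : Fin (n i)) : ∀ s, Fin (n s) :=
  fun s => if h : s = i then Fin.cast (congrArg n h).symm v else k ⟨s, h⟩

@[simp] lemma glue_same (n : Fin r → ℕ) (i : Fin r) (k) (v) : glue n i k v i = v := by
  simp [glue]

lemma glue_ne (n : Fin r → ℕ) (i : Fin r) (k) (v) {s : Fin r} (h : s ≠ i) :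
    glue n i k v s = k ⟨s, h⟩ := by simp [glue, h]

lemma glue_restrict (n : Fin r → ℕ) (i : Fin r) (m : ∀ s, Fin (n s)) :
    glue n i (fun s => m s.1) (m i) = m := by
  funext s
  by_cases h : s = i
  · subst h; simp [glue]
  · simp [glue, h]

lemma restrict_glue (n : Fin r → ℕ) (i : Fin r) (k) (v) :
    (fun s : {s : Fin r // s ≠ i} => glue n i k v s.1) = k := by
  funext s; rw [glue_ne n i k v s.2]

/-- The "fiber" description of a one-factor anticode. -/
def fiberCode (n : Fin r → ℕ) (i : Fin r) (U : Submodule F (Fin (n i) → F)) :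
    Submodule F (TSpace F n) where
  carrier := {X | ∀ k, (fun v => X (glue n i k v)) ∈ U}
  add_mem' := fun ha hb k => U.add_mem (ha k) (hb k)
  zero_mem' := fun _ => U.zero_mem
  smul_mem' := fun c _ hX k => U.smul_mem c (hX k)

lemma mem_fiberCode {n : Fin r → ℕ} {i : Fin r} {U : Submodule F (Fin (n i) → F)}
    {X : TSpace F n} : X ∈ fiberCode n i U ↔ ∀ k, (fun v => X (glue n i k v)) ∈ U :=
  Iff.rfl

lemma simpleTensor_fiber (n : Fin r → ℕ) (i : Fin r) (x : ∀ s, Fin (n s) → F) (k) :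
    (fun v => simpleTensor n x (glue n i k v))
      = (∏ s : {s : Fin r // s ≠ i}, x s.1 (k s)) • x i := by
  funext v
  simp only [simpleTensor, Pi.smul_apply, smul_eq_mul]
  rw [← Finset.prod_erase_mul Finset.univ _ (Finset.mem_univ i), glue_same]
  congr 1
  rw [Finset.prod_subtype (Finset.univ.erase i) (p := fun s => s ≠ i)
    (fun s => by simp) (fun s => x s (glue n i k v s))]
  exact Finset.prod_congr rfl fun s _ => by rw [glue_ne n i k v s.2]

/-- The closure anticode with a single constrained factor equals the fiber code. -/
lemma closureAnticode_eq_fiberCode (n : Fin r → ℕ) (i : Fin r)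
    (U : Submodule F (Fin (n i) → F)) :
    closureAnticode n (Function.update (fun _ => (⊤ : Submodule F _)) i U) = fiberCode n i U := by
  apply le_antisymm
  · rw [closureAnticode, Submodule.span_le]
    rintro X ⟨x, hx, rfl⟩
    intro k
    rw [simpleTensor_fiber]
    have hxi : x i ∈ U := by simpa using hx i
    exact U.smul_mem _ hxi
  · intro X hX
    classical
    have key : X = ∑ k : (∀ s : {s : Fin r // s ≠ i}, Fin (n s.1)),
        simpleTensor n (fun s => if h : s = i then
            (fun w => X (glue n i k (Fin.cast (congrArg n h) w)))
          else Pi.single (k ⟨s, h⟩) (1 : F)) := by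
      funext m
      rw [Finset.sum_apply]
      rw [Finset.sum_eq_single (fun s : {s : Fin r // s ≠ i} => m s.1)]
      · set y := fun s => if h : s = i then
            (fun w => X (glue n i (fun s => m s.1) (Fin.cast (congrArg n h) w)))
          else Pi.single (m s) (1 : F) with hy
        have h1 : simpleTensor n y m
            = simpleTensor n y (glue n i (fun s => m s.1) (m i)) := by
          rw [glue_restrict]
        rw [h1]
        have h2 := congrFun (simpleTensor_fiber n i y (fun s => m s.1)) (m i)
        rw [h2]
        have h3 : y i = fun w => X (glue n i (fun s => m s.1) w) := by
          simp only [hy, dif_pos rfl]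
          funext w
          congr 1
        have h4 : ∀ s : {s : Fin r // s ≠ i}, y s.1 = Pi.single (m s.1) (1 : F) := by
          intro s; simp only [hy, dif_neg s.2]
        simp only [Pi.smul_apply, smul_eq_mul, h3]
        rw [glue_restrict]
        have h5 : ∏ s : {s : Fin r // s ≠ i}, y s.1 (m s.1) = 1 := by
          apply Finset.prod_eq_one
          intro s _
          rw [h4 s, Pi.single_eq_same]
        rw [h5, one_mul]
      · intro k _ hk
        obtain ⟨s₀, hs₀⟩ : ∃ s₀ : {s : Fin r // s ≠ i}, k s₀ ≠ m s₀.1 := by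
          by_contra hcon
          push_neg at hcon
          exact hk (funext fun s => hcon s)
        apply Finset.prod_eq_zero (Finset.mem_univ s₀.1)
        simp only [dif_neg s₀.2, Subtype.coe_eta]
        exact Pi.single_eq_of_ne (Ne.symm hs₀) 1
      · intro h; exact absurd (Finset.mem_univ _) h
    rw [key]
    apply Submodule.sum_mem
    intro k _
    apply Submodule.subset_span
    refine ⟨_, fun s => ?_, rfl⟩
    by_cases h : s = i
    · subst h
      simp only [dif_pos rfl, Function.update_self]
      exact hX k
    · simp [Function.update_of_ne h]

/-- The fiber code is linearly equivalent to a function space into `U`. -/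
def fiberEquiv (n : Fin r → ℕ) (i : Fin r) (U : Submodule F (Fin (n i) → F)) :
    ↥(fiberCode n i U) ≃ₗ[F]
      ((∀ s : {s : Fin r // s ≠ i}, Fin (n s.1)) → ↥U) where
  toFun X k := ⟨fun v => X.1 (glue n i k v), X.2 k⟩
  map_add' X Y := rfl
  map_smul' c X := rfl
  invFun Y := ⟨fun m => (Y (fun s => m s.1)).1 (m i), by
    intro k
    have h1 : (fun v => (Y (fun s : {s : Fin r // s ≠ i} => glue n i k v s.1)).1
        (glue n i k v i)) = (Y k).1 := by
      funext v
      rw [restrict_glue, glue_same]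
    rw [h1]
    exact (Y k).2⟩
  left_inv X := by
    apply Subtype.ext
    funext m
    show (X.1 (glue n i (fun s => m s.1) (m i))) = X.1 m
    rw [glue_restrict]
  right_inv Y := by
    funext k
    apply Subtype.ext
    funext v
    show (Y (fun s : {s : Fin r // s ≠ i} => glue n i k v s.1)).1
        (glue n i k v i) = (Y k).1 v
    rw [restrict_glue, glue_same]

lemma finrank_fiberCode (n : Fin r → ℕ) (i : Fin r) (U : Submodule F (Fin (n i) → F)) :
    finrank F ↥(fiberCode n i U)
      = (∏ s ∈ Finset.univ.erase i, n s) * finrank F ↥U := by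
  haveI : Fintype {s : Fin r // s ≠ i} := Subtype.fintype _
  rw [LinearEquiv.finrank_eq (fiberEquiv n i U)]
  rw [Module.finrank_pi_fintype F]
  rw [Finset.sum_const, smul_eq_mul]
  congr 1
  rw [Finset.card_univ, Fintype.card_pi]
  rw [Finset.prod_subtype (Finset.univ.erase i) (p := fun s => s ≠ i)
    (fun s => by simp) (fun s => n s)]
  simp
  exact this

lemma fiberCode_bot (n : Fin r → ℕ) (i : Fin r) :
    fiberCode n i (⊥ : Submodule F (Fin (n i) → F)) = ⊥ := by
  ext X
  simp only [mem_fiberCode, Submodule.mem_bot]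
  constructor
  · intro h
    funext m
    have := congrFun (h (fun s => m s.1)) (m i)
    rw [glue_restrict] at this
    simpa using this
  · rintro rfl k
    rfl

lemma fiberCode_top (n : Fin r → ℕ) (i : Fin r) :
    fiberCode n i (⊤ : Submodule F (Fin (n i) → F)) = ⊤ := by
  ext X
  simp [mem_fiberCode]

lemma le_of_fiberCode_le (n : Fin r → ℕ) (hpos : ∀ s, 0 < n s) (i : Fin r)
    {U₁ U₂ : Submodule F (Fin (n i) → F)}
    (h : fiberCode n i U₁ ≤ fiberCode n i U₂) : U₁ ≤ U₂ := by
  intro u hu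
  classical
  set x : ∀ s, Fin (n s) → F := fun s =>
    if h : s = i then (fun w => u (Fin.cast (congrArg n h) w)) else fun _ => 1 with hx
  have hxi : x i = u := by
    rw [hx]
    exact (dif_pos rfl).trans (funext fun w => congrArg u (Fin.ext rfl))
  have hfib : ∀ k, (fun v => simpleTensor n x (glue n i k v)) = u := by
    intro k
    rw [simpleTensor_fiber, hxi]
    have hc : ∏ s : {s : Fin r // s ≠ i}, x s.1 (k s) = 1 := by
      apply Finset.prod_eq_one
      intro s _
      simp only [hx, dif_neg s.2]
    rw [hc, one_smul]
  have hmem1 : simpleTensor n x ∈ fiberCode n i U₁ := by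
    intro k; rw [hfib k]; exact hu
  have hmem2 := h hmem1
  have := hmem2 (fun s => ⟨0, hpos s.1⟩)
  rwa [hfib] at this

lemma fiberCode_inj (n : Fin r → ℕ) (hpos : ∀ s, 0 < n s) (i : Fin r)
    {U₁ U₂ : Submodule F (Fin (n i) → F)}
    (h : fiberCode n i U₁ = fiberCode n i U₂) : U₁ = U₂ :=
  le_antisymm (le_of_fiberCode_le n hpos i h.le) (le_of_fiberCode_le n hpos i h.ge)

/-- Cross-index rigidity. -/
lemma fiberCode_cross (n : Fin r → ℕ) (hpos : ∀ s, 0 < n s) {i i' : Fin r} (hne : i ≠ i')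
    {U : Submodule F (Fin (n i) → F)} {U' : Submodule F (Fin (n i') → F)}
    (hU' : U' ≠ ⊥) (h : fiberCode n i U = fiberCode n i' U') : U = ⊤ := by
  classical
  obtain ⟨u', hu'U, hu'0⟩ : ∃ u', u' ∈ U' ∧ u' ≠ 0 := by
    by_contra hcon
    push_neg at hcon
    exact hU' (le_antisymm (fun z hz => by
      rcases eq_or_ne z 0 with rfl | hz0
      · exact Submodule.zero_mem _
      · exact absurd hz0 (not_not.mpr (hcon z hz))) bot_le)
  obtain ⟨w', hw'⟩ : ∃ w', u' w' ≠ 0 := by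
    by_contra hcon
    push_neg at hcon
    exact hu'0 (funext hcon)
  rw [eq_top_iff]
  intro v _
  set x : ∀ s, Fin (n s) → F := fun s =>
    if h1 : s = i then (fun w => v (Fin.cast (congrArg n h1) w))
    else if h2 : s = i' then (fun w => u' (Fin.cast (congrArg n h2) w))
    else fun _ => 1 with hx
  have hxi : x i = v := by
    rw [hx]
    exact (dif_pos rfl).trans (funext fun w => congrArg v (Fin.ext rfl))
  have hxi' : x i' = u' := by
    rw [hx]
    exact ((dif_neg (Ne.symm hne)).trans (dif_pos rfl)).trans
      (funext fun w => congrArg u' (Fin.ext rfl))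
  have hmem' : simpleTensor n x ∈ fiberCode n i' U' := by
    intro k
    rw [simpleTensor_fiber, hxi']
    exact U'.smul_mem _ hu'U
  rw [← h] at hmem'
  set k₀ : ∀ s : {s : Fin r // s ≠ i}, Fin (n s.1) := fun s =>
    if h2 : s.1 = i' then Fin.cast (congrArg n h2).symm w' else ⟨0, hpos s.1⟩ with hk₀
  have hfib := hmem' k₀
  rw [simpleTensor_fiber, hxi] at hfib
  set c : F := ∏ s : {s : Fin r // s ≠ i}, x s.1 (k₀ s) with hc
  have hc0 : c ≠ 0 := by
    rw [hc, Finset.prod_ne_zero_iff]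
    intro s _
    by_cases h2 : s.1 = i'
    · have h2' : s = ⟨i', Ne.symm hne⟩ := Subtype.ext h2
      subst h2'
      have hk : k₀ ⟨i', Ne.symm hne⟩ = w' := by
        rw [hk₀]
        exact (dif_pos rfl).trans (Fin.ext rfl)
      show x i' (k₀ ⟨i', Ne.symm hne⟩) ≠ 0
      rw [hxi', hk]
      exact hw'
    · have hk1 : x s.1 = if h2 : s.1 = i' then
          (fun w => u' (Fin.cast (congrArg n h2) w)) else fun _ => (1:F) := by
        rw [hx]
        exact dif_neg s.2
      rw [hk1, dif_neg h2]
      exact one_ne_zero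
  have := U.smul_mem c⁻¹ hfib
  rwa [smul_smul, inv_mul_cancel₀ hc0, one_smul] at this

set_option synthInstance.maxHeartbeats 400000 in
lemma card_indep_key (N u : ℕ) (hu : u ≤ N) :
    ∏ i : Fin u, (Fintype.card F ^ N - Fintype.card F ^ i.1)
      = Nat.card {U : Submodule F (Fin N → F) // finrank F ↥U = u}
        * ∏ i : Fin u, (Fintype.card F ^ u - Fintype.card F ^ i.1) := by
  classical
  have hfr : finrank F (Fin N → F) = N := by
    simp [Module.finrank_fintype_fun_eq_card]
  have hT : Nat.card {s : Fin u → (Fin N → F) // LinearIndependent F s}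
      = ∏ i : Fin u, (Fintype.card F ^ N - Fintype.card F ^ i.1) := by
    have h := card_linearIndependent (K := F) (V := Fin N → F) (k := u)
      (by rw [hfr]; exact hu)
    rw [hfr] at h
    exact h
  haveI : Finite (Submodule F (Fin N → F)) :=
    Finite.of_injective _ SetLike.coe_injective
  haveI fS : Fintype (Submodule F (Fin N → F)) := Fintype.ofFinite _
  set f : {s : Fin u → (Fin N → F) // LinearIndependent F s} → Submodule F (Fin N → F) :=
    fun s => Submodule.span F (Set.range s.1) with hf
  haveI : ∀ U, Fintype {s // f s = U} := fun U => Fintype.ofFinite _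
  have hcard : Nat.card {s : Fin u → (Fin N → F) // LinearIndependent F s}
      = ∑ U : Submodule F (Fin N → F), Nat.card {s // f s = U} := by
    rw [← Nat.card_congr (Equiv.sigmaFiberEquiv f)]
    rw [Nat.card_eq_fintype_card, Fintype.card_sigma]
    exact Finset.sum_congr rfl fun U _ =>
      (Nat.card_eq_fintype_card (α := {s // f s = U})).symm
  have hfib : ∀ U : Submodule F (Fin N → F), Nat.card {s // f s = U}
      = if finrank F ↥U = u then
          ∏ i : Fin u, (Fintype.card F ^ u - Fintype.card F ^ i.1) else 0 := by
    intro U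
    by_cases hU : finrank F ↥U = u
    · rw [if_pos hU]
      have e : {s // f s = U} ≃ {t : Fin u → ↥U // LinearIndependent F t} :=
        { toFun := fun s => ⟨fun j => ⟨s.1.1 j,
              le_of_eq s.2 (Submodule.subset_span (Set.mem_range_self j))⟩,
            LinearIndependent.of_comp U.subtype s.1.2⟩
          invFun := fun t => ⟨⟨U.subtype ∘ t.1, t.2.map' U.subtype U.ker_subtype⟩, by
            have h1 : Submodule.span F (Set.range t.1) = ⊤ := by
              apply Submodule.eq_top_of_finrank_eq
              rw [finrank_span_eq_card t.2, Fintype.card_fin, hU]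
            have h2 : Submodule.span F (Set.range (⇑U.subtype ∘ t.1))
                = Submodule.map U.subtype (Submodule.span F (Set.range t.1)) := by
              rw [Set.range_comp, Submodule.span_image]
            show Submodule.span F (Set.range (⇑U.subtype ∘ t.1)) = U
            rw [h2, h1, Submodule.map_subtype_top]⟩
          left_inv := fun s => Subtype.ext (Subtype.ext rfl)
          right_inv := fun t => Subtype.ext (funext fun j => Subtype.ext rfl) }
      rw [Nat.card_congr e]
      have h := card_linearIndependent (K := F) (V := ↥U) (k := u) (le_of_eq hU.symm)
      rw [hU] at h
      exact h
    · rw [if_neg hU]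
      haveI : IsEmpty {s // f s = U} := by
        constructor
        rintro ⟨s, hs⟩
        apply hU
        rw [← hs]
        show finrank F ↥(Submodule.span F (Set.range s.1)) = u
        rw [finrank_span_eq_card s.2, Fintype.card_fin]
      exact Nat.card_of_isEmpty
  rw [← hT, hcard]
  have : ∑ U : Submodule F (Fin N → F), Nat.card {s // f s = U}
      = ∑ U : Submodule F (Fin N → F), (if finrank F ↥U = u then
          ∏ i : Fin u, (Fintype.card F ^ u - Fintype.card F ^ i.1) else 0) :=
    Finset.sum_congr rfl fun U _ => hfib U
  rw [this, ← Finset.sum_filter, Finset.sum_const, smul_eq_mul]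
  congr 1
  rw [Nat.card_eq_fintype_card, Fintype.card_subtype]

lemma qBinom_mul (q Nn u : ℕ) (hq : 1 < q) (hu : u ≤ Nn) :
    qBinom q Nn u * ∏ i ∈ Finset.range u, ((q:ℚ)^u - (q:ℚ)^i)
      = ∏ i ∈ Finset.range u, ((q:ℚ)^Nn - (q:ℚ)^i) := by
  have hqQ : (1:ℚ) < (q:ℚ) := by exact_mod_cast hq
  have hB : ∀ i : ℕ, ((q:ℚ)^(i+1) - 1) ≠ 0 := fun i => by
    have : (1:ℚ) < (q:ℚ)^(i+1) := one_lt_pow₀ hqQ (Nat.succ_ne_zero i)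
    linarith
  rw [qBinom, if_neg (not_lt.mpr (by exact_mod_cast hu))]
  have hA : ∀ i ∈ Finset.range u,
      ((q:ℚ)^(((Nn:ℤ) - i).toNat) - 1)/((q:ℚ)^(i+1) - 1)
        = ((q:ℚ)^(Nn-i) - 1)/((q:ℚ)^(i+1) - 1) := by
    intro i hi
    have h1 : ((Nn:ℤ) - i).toNat = Nn - i := by
      have := Finset.mem_range.mp hi; omega
    rw [h1]
  rw [Finset.prod_congr rfl hA, Finset.prod_div_distrib]
  have hsplit : ∏ i ∈ Finset.range u, ((q:ℚ)^u - (q:ℚ)^i)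
      = (∏ i ∈ Finset.range u, (q:ℚ)^i) * ∏ i ∈ Finset.range u, ((q:ℚ)^(u-i) - 1) := by
    rw [← Finset.prod_mul_distrib]
    apply Finset.prod_congr rfl
    intro i hi
    rw [mul_sub, mul_one, ← pow_add,
      Nat.add_sub_cancel' (le_of_lt (Finset.mem_range.mp hi))]
  have hrefl : ∏ i ∈ Finset.range u, ((q:ℚ)^(u-i) - 1)
      = ∏ i ∈ Finset.range u, ((q:ℚ)^(i+1) - 1) := by
    rw [← Finset.prod_range_reflect (fun j => ((q:ℚ)^(j+1) - 1)) u]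
    apply Finset.prod_congr rfl
    intro i hi
    have := Finset.mem_range.mp hi
    congr 2
    omega
  have hsplitN : ∏ i ∈ Finset.range u, ((q:ℚ)^Nn - (q:ℚ)^i)
      = (∏ i ∈ Finset.range u, (q:ℚ)^i) * ∏ i ∈ Finset.range u, ((q:ℚ)^(Nn-i) - 1) := by
    rw [← Finset.prod_mul_distrib]
    apply Finset.prod_congr rfl
    intro i hi
    rw [mul_sub, mul_one, ← pow_add,
      Nat.add_sub_cancel' (le_trans (le_of_lt (Finset.mem_range.mp hi)) hu)]
  rw [hsplit, hrefl, hsplitN]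
  have hBprod : (∏ i ∈ Finset.range u, ((q:ℚ)^(i+1) - 1)) ≠ 0 :=
    Finset.prod_ne_zero_iff.mpr (fun i _ => hB i)
  field_simp

lemma card_subspaces_s10 (Nn u : ℕ) (hu : u ≤ Nn) :
    (Nat.card {U : Submodule F (Fin Nn → F) // finrank F ↥U = u} : ℚ)
      = qBinom (Fintype.card F) Nn u := by
  have hq : 1 < Fintype.card F := Fintype.one_lt_card
  have key := card_indep_key (F := F) Nn u hu
  have hcast : ∀ (M : ℕ), u ≤ M →
      ((∏ i : Fin u, (Fintype.card F ^ M - Fintype.card F ^ i.1) : ℕ) : ℚ)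
        = ∏ i ∈ Finset.range u, ((Fintype.card F:ℚ)^M - (Fintype.card F:ℚ)^i) := by
    intro M hM
    rw [← Fin.prod_univ_eq_prod_range
      (fun i => ((Fintype.card F:ℚ)^M - (Fintype.card F:ℚ)^i)) u]
    rw [Nat.cast_prod]
    apply Finset.prod_congr rfl
    intro i _
    rw [Nat.cast_sub (Nat.pow_le_pow_right (le_of_lt hq)
      (le_trans (le_of_lt i.2) hM))]
    push_cast
    ring
  have keyQ : (∏ i ∈ Finset.range u, ((Fintype.card F:ℚ)^Nn - (Fintype.card F:ℚ)^i))
      = (Nat.card {U : Submodule F (Fin Nn → F) // finrank F ↥U = u} : ℚ)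
        * ∏ i ∈ Finset.range u, ((Fintype.card F:ℚ)^u - (Fintype.card F:ℚ)^i) := by
    rw [← hcast Nn hu, ← hcast u le_rfl, key]
    push_cast
    ring
  have hden : (∏ i ∈ Finset.range u,
      ((Fintype.card F:ℚ)^u - (Fintype.card F:ℚ)^i)) ≠ 0 := by
    apply Finset.prod_ne_zero_iff.mpr
    intro i hi
    have hi' := Finset.mem_range.mp hi
    have : (Fintype.card F:ℚ)^i < (Fintype.card F:ℚ)^u := by
      apply pow_lt_pow_right₀ (by exact_mod_cast hq) hi'
    linarith
  apply mul_right_cancel₀ hden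
  rw [← keyQ, qBinom_mul (Fintype.card F) Nn u hq hu]

end Aux

/-- Cardinality of the set `𝒜^R_a` of Ravagnani-type anticodes of dimension `a`, together
with the vanishing of `B_a^{(R,j)}(C)` and `W_a^{(R,j)}(C)` when `n ∤ a·n₁`. -/
theorem stmt10 {F : Type*} [Field F] [Fintype F] (r : ℕ) (n : Fin (r + 2) → ℕ)
    (hn1 : 2 ≤ n 0) (hmin : ∀ i, n 0 ≤ n i) (hmax : ∀ i, n i ≤ n (Fin.last (r + 1)))
    (a : ℕ) (ha : a ≤ ∏ i, n i) :
    ((¬ (∏ s, n s) ∣ a * n 0) →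
      (RavagnaniAnticodes (F := F) n ∩ {A | finrank F ↥A = a}).ncard = 0) ∧
    (((∏ s, n s) ∣ a * n 0) → a ≠ 0 → a ≠ ∏ s, n s →
      ((RavagnaniAnticodes (F := F) n ∩ {A | finrank F ↥A = a}).ncard : ℚ)
        = ((Finset.univ.filter fun i => n i = n 0).card : ℚ) *
            qBinom (Fintype.card F) (n 0) (a * n 0 / ∏ s, n s)) ∧
    ((a = 0 ∨ a = ∏ s, n s) →
      (RavagnaniAnticodes (F := F) n ∩ {A | finrank F ↥A = a}).ncard = 1) ∧
    ((¬ (∏ s, n s) ∣ a * n 0) →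
      ∀ (C : Submodule F (TSpace F n)) (j : ℕ), 1 ≤ j → j ≤ finrank F ↥C →
        BR n j C a = 0 ∧ WR n j C a = 0) := by
  classical
  have hpos : ∀ s, 0 < n s := fun s => lt_of_lt_of_le (by omega) (hmin s)
  have hPpos : 0 < ∏ s, n s := Finset.prod_pos (fun s _ => hpos s)
  -- membership characterization
  have hSmem : ∀ A : Submodule F (TSpace F n),
      A ∈ (RavagnaniAnticodes (F := F) n ∩ {A | finrank F ↥A = a}) ↔
      ∃ (i : Fin (r+2)) (U : Submodule F (Fin (n i) → F)),
        n i = n 0 ∧ A = fiberCode n i U ∧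
          (∏ s ∈ Finset.univ.erase i, n s) * finrank F ↥U = a := by
    intro A
    constructor
    · rintro ⟨⟨i, U, hi, rfl⟩, hfr⟩
      refine ⟨i, U, hi, closureAnticode_eq_fiberCode n i U, ?_⟩
      rw [← finrank_fiberCode, ← closureAnticode_eq_fiberCode]
      exact hfr
    · rintro ⟨i, U, hi, rfl, hfr⟩
      refine ⟨⟨i, U, hi, (closureAnticode_eq_fiberCode n i U).symm⟩, ?_⟩
      show finrank F ↥(fiberCode n i U) = a
      rw [finrank_fiberCode]
      exact hfr
  -- emptiness when not divisible
  have hempty : ¬ ((∏ s, n s) ∣ a * n 0) →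
      (RavagnaniAnticodes (F := F) n ∩ {A | finrank F ↥A = a}) = ∅ := by
    intro hnd
    ext A
    simp only [Set.mem_empty_iff_false, iff_false]
    intro hA
    rw [hSmem A] at hA
    obtain ⟨i, U, hi, -, hfr⟩ := hA
    apply hnd
    refine ⟨finrank F ↥U, ?_⟩
    calc a * n 0 = ((∏ s ∈ Finset.univ.erase i, n s) * finrank F ↥U) * n i := by
          rw [hfr, hi]
      _ = ((∏ s ∈ Finset.univ.erase i, n s) * n i) * finrank F ↥U := by ring
      _ = (∏ s, n s) * finrank F ↥U := by
          rw [Finset.prod_erase_mul Finset.univ n (Finset.mem_univ i)]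
  have hbotmem : (⊥ : Submodule F (TSpace F n)) ∈ RavagnaniAnticodes (F := F) n :=
    ⟨0, ⊥, rfl, by rw [closureAnticode_eq_fiberCode, fiberCode_bot]⟩
  have htopmem : (⊤ : Submodule F (TSpace F n)) ∈ RavagnaniAnticodes (F := F) n :=
    ⟨0, ⊤, rfl, by rw [closureAnticode_eq_fiberCode, fiberCode_top]⟩
  have hfrT : finrank F (TSpace F n) = ∏ s, n s := by
    rw [Module.finrank_fintype_fun_eq_card, Fintype.card_pi]
    simp
  refine ⟨?_, ?_, ?_, ?_⟩
  · -- part 1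
    intro hnd
    rw [hempty hnd, Set.ncard_empty]
  · -- part 2
    intro hdvd ha0 haP
    set u := a * n 0 / ∏ s, n s with hu
    have hun : u * ∏ s, n s = a * n 0 := Nat.div_mul_cancel hdvd
    have hu0 : u ≠ 0 := by
      intro h
      rw [h, zero_mul] at hun
      have := hpos 0
      rcases Nat.mul_eq_zero.mp hun.symm with h' | h' <;> omega
    have hult : u < n 0 := by
      have haP' : a < ∏ s, n s := lt_of_le_of_ne ha haP
      have h2 : a * n 0 < (∏ s, n s) * n 0 := (Nat.mul_lt_mul_right (hpos 0)).mpr haP'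
      rw [← hun] at h2
      have h3 : u * (∏ s, n s) < n 0 * (∏ s, n s) := by
        calc u * ∏ s, n s < (∏ s, n s) * n 0 := h2
          _ = n 0 * ∏ s, n s := Nat.mul_comm _ _
      exact lt_of_mul_lt_mul_right h3 (Nat.zero_le _)
    have hceq : ∀ i : Fin (r+2), n i = n 0 → ∀ U : Submodule F (Fin (n i) → F),
        finrank F ↥U = u → (∏ s ∈ Finset.univ.erase i, n s) * finrank F ↥U = a := by
      intro i hi U hU
      have h1 : ((∏ s ∈ Finset.univ.erase i, n s) * u) * n i = a * n i := by
        calc ((∏ s ∈ Finset.univ.erase i, n s) * u) * n i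
            = u * ((∏ s ∈ Finset.univ.erase i, n s) * n i) := by ring
          _ = u * ∏ s, n s := by
              rw [Finset.prod_erase_mul Finset.univ n (Finset.mem_univ i)]
          _ = a * n 0 := hun
          _ = a * n i := by rw [hi]
      rw [hU]
      exact Nat.eq_of_mul_eq_mul_right (hpos i) h1
    have hmemg : ∀ p : (i : {i : Fin (r+2) // n i = n 0}) ×
        {U : Submodule F (Fin (n i.1) → F) // finrank F ↥U = u},
        fiberCode n p.1.1 p.2.1 ∈
          (RavagnaniAnticodes (F := F) n ∩ {A | finrank F ↥A = a}) := by
      intro p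
      rw [hSmem]
      exact ⟨p.1.1, p.2.1, p.1.2, rfl, hceq p.1.1 p.1.2 p.2.1 p.2.2⟩
    set g : ((i : {i : Fin (r+2) // n i = n 0}) ×
        {U : Submodule F (Fin (n i.1) → F) // finrank F ↥U = u}) →
        ↥(RavagnaniAnticodes (F := F) n ∩ {A | finrank F ↥A = a}) :=
      fun p => ⟨fiberCode n p.1.1 p.2.1, hmemg p⟩ with hg
    have hbij : Function.Bijective g := by
      constructor
      · rintro ⟨⟨i, hi⟩, ⟨U, hU⟩⟩ ⟨⟨i', hi'⟩, ⟨U', hU'⟩⟩ hpq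
        have h : fiberCode n i U = fiberCode n i' U' := congrArg Subtype.val hpq
        by_cases hii : i = i'
        · subst hii
          obtain rfl : U = U' := fiberCode_inj n hpos i h
          rfl
        · exfalso
          have hU'bot : U' ≠ ⊥ := by
            intro hb
            rw [hb, finrank_bot] at hU'
            exact hu0 hU'.symm
          have htop := fiberCode_cross n hpos hii hU'bot h
          rw [htop, finrank_top, Module.finrank_fintype_fun_eq_card,
            Fintype.card_fin] at hU
          have hle := hmin i
          rw [hU] at hle
          exact absurd hle (not_le.mpr hult)
      · rintro ⟨A, hA⟩
        rw [hSmem A] at hA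
        obtain ⟨i, U, hi, rfl, hfr⟩ := hA
        have hUu : finrank F ↥U = u := by
          have h1 : finrank F ↥U * ∏ s, n s = u * ∏ s, n s := by
            calc finrank F ↥U * ∏ s, n s
                = finrank F ↥U * ((∏ s ∈ Finset.univ.erase i, n s) * n i) := by
                  rw [Finset.prod_erase_mul Finset.univ n (Finset.mem_univ i)]
              _ = ((∏ s ∈ Finset.univ.erase i, n s) * finrank F ↥U) * n i := by ring
              _ = a * n i := by rw [hfr]
              _ = a * n 0 := by rw [hi]
              _ = u * ∏ s, n s := hun.symm
          exact Nat.eq_of_mul_eq_mul_right hPpos h1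
        exact ⟨⟨⟨i, hi⟩, ⟨U, hUu⟩⟩, rfl⟩
    haveI hfinU : ∀ i : {i : Fin (r+2) // n i = n 0},
        Fintype {U : Submodule F (Fin (n i.1) → F) // finrank F ↥U = u} := fun i =>
      haveI : Finite (Submodule F (Fin (n i.1) → F)) :=
        Finite.of_injective _ SetLike.coe_injective
      Fintype.ofFinite _
    have hcount : (RavagnaniAnticodes (F := F) n ∩ {A | finrank F ↥A = a}).ncard
        = ∑ i : {i : Fin (r+2) // n i = n 0},
            Nat.card {U : Submodule F (Fin (n i.1) → F) // finrank F ↥U = u} := by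
      rw [← Nat.card_coe_set_eq]
      rw [← Nat.card_congr (Equiv.ofBijective g hbij)]
      rw [Nat.card_eq_fintype_card, Fintype.card_sigma]
      exact Finset.sum_congr rfl fun i _ => (Nat.card_eq_fintype_card
        (α := {U : Submodule F (Fin (n i.1) → F) // finrank F ↥U = u})).symm
    rw [hcount]
    push_cast
    have hterm : ∀ i : {i : Fin (r+2) // n i = n 0},
        (Nat.card {U : Submodule F (Fin (n i.1) → F) // finrank F ↥U = u} : ℚ)
          = qBinom (Fintype.card F) (n 0) u := by
      intro i
      rw [card_subspaces_s10 (n i.1) u (by rw [i.2]; exact le_of_lt hult)]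
      rw [i.2]
    rw [Finset.sum_congr rfl (fun i _ => hterm i), Finset.sum_const]
    rw [nsmul_eq_mul]
    congr 2
    rw [Finset.card_univ, Fintype.card_subtype]
  · -- part 3
    rintro (rfl | haP)
    · have hset : (RavagnaniAnticodes (F := F) n ∩ {A | finrank F ↥A = 0})
          = {(⊥ : Submodule F (TSpace F n))} := by
        ext A
        simp only [Set.mem_inter_iff, Set.mem_setOf_eq, Set.mem_singleton_iff]
        constructor
        · rintro ⟨hA, hfr⟩
          exact Submodule.finrank_eq_zero.mp hfr
        · rintro rfl
          exact ⟨hbotmem, finrank_bot F _⟩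
      rw [hset, Set.ncard_singleton]
    · have hset : (RavagnaniAnticodes (F := F) n ∩ {A | finrank F ↥A = a})
          = {(⊤ : Submodule F (TSpace F n))} := by
        ext A
        simp only [Set.mem_inter_iff, Set.mem_setOf_eq, Set.mem_singleton_iff]
        constructor
        · rintro ⟨hA, hfr⟩
          exact Submodule.eq_top_of_finrank_eq
            (by rw [hfr, haP, hfrT])
        · rintro rfl
          refine ⟨htopmem, ?_⟩
          rw [finrank_top, hfrT, haP]
      rw [hset, Set.ncard_singleton]
  · -- part 4
    intro hnd C j _ _
    constructor
    · rw [BR, hempty hnd, finsum_mem_empty]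
    · rw [WR, hempty hnd, finsum_mem_empty]

end TensorPaper
end
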